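/- arXiv:1406.6343 — 11 statements merged into one kernel-verified Lean document; each statement's English description precedes it below -/
import Mathlib

section
/- For every natural number m, sum_{k=0}^m g(k) = (9/8)*(m+1)*(m+3)*g(m+1), where g(k) = (3k+1)!/(k! * k! * (k+1)!) * 3^(-3k) / (k+2). -/
/-!
The sum is Gosper-summable. The term ratio is
`g (k + 1) / g k = (3k + 2)(3k + 4) / (9 (k + 1)(k + 3))`, and with it one checks that
`S n = (9/8) n (n + 2) g n` satisfies `S (n + 1) - S n = g n` and `S 0 = 0`, so `S` is the
partial sum sequence.
-/

noncomputable def g (k : ℕ) : ℚ :=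
  ((3 * k + 1).factorial : ℚ) /
    ((k.factorial : ℚ) * (k.factorial : ℚ) * ((k + 1).factorial : ℚ)) /
    (3 : ℚ) ^ (3 * k) / (k + 2)

lemma factorial_three_mul_succ_add_one (k : ℕ) :
    (3 * (k + 1) + 1).factorial =
      (3 * k + 4) * (3 * k + 3) * (3 * k + 2) * (3 * k + 1).factorial := by
  rw [show 3 * (k + 1) + 1 = 3 * k + 1 + 1 + 1 + 1 by ring]
  simp only [Nat.factorial_succ]
  ring

lemma g_succ_mul (k : ℕ) :
    9 * ((k : ℚ) + 1) * (k + 3) * g (k + 1) = (3 * k + 2) * (3 * k + 4) * g k := by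
  have hpow : (3 : ℚ) ^ (3 * (k + 1)) = 27 * 3 ^ (3 * k) := by ring
  simp only [g, factorial_three_mul_succ_add_one, Nat.factorial_succ (k + 1),
    Nat.factorial_succ k, hpow]
  push_cast
  field_simp
  ring

/-- ∑_{k=0}^m g(k) = (9/8) * (m+1) * (m+3) * g(m+1). -/
theorem sum_g_closed (m : ℕ) :
    ∑ k ∈ Finset.range (m + 1), g k =
      (9 / 8 : ℚ) * (m + 1) * (m + 3) * g (m + 1) := by
  rw [Finset.sum_range_induction g (fun n ↦ 9 / 8 * (n : ℚ) * (n + 2) * g n) (by simp) (m + 1)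
    fun n _ ↦ by push_cast; linear_combination g_succ_mul n / 8]
  push_cast
  ring
end

section
/- For every natural number m, sum_{k=0}^m (3k)!/(k!^3) * 3^(-3k)/(k+1) = binom(m+2,2) * binom(3m+4, m+1) * binom(2m+3, m+1) * 3^(-3m-1) / (3m+4), as rational numbers. -/
/-!
With `t k = (3k)! / (k!³ 27ᵏ)` one has `t (k+1) / t k = (3k+1)(3k+2) / (9(k+1)²)`, and this
ratio shows that `9k/2 · t k` is an antidifference of `t k / (k+1)` (Gosper's algorithm finds it).
The sum therefore telescopes to `9(m+1)/2 · t (m+1)`, which is the stated product of binomial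
coefficients once these are written out in factorials.
-/

open Finset

noncomputable def multinomialTerm (n : ℕ) : ℚ :=
  ((3 * n).factorial : ℚ) / (n.factorial : ℚ) ^ 3 / 3 ^ (3 * n)

lemma multinomialTerm_succ (n : ℕ) :
    multinomialTerm (n + 1) =
      multinomialTerm n * ((3 * n + 1) * (3 * n + 2) / (9 * (n + 1) ^ 2)) := by
  have h3 : 3 * (n + 1) = 3 * n + 2 + 1 := by ring
  have hn : (n : ℚ) + 1 ≠ 0 := by positivity
  simp only [multinomialTerm]
  rw [h3, Nat.factorial_succ, Nat.factorial_succ, Nat.factorial_succ, Nat.factorial_succ,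
    pow_succ, pow_succ, pow_succ]
  push_cast
  field_simp
  ring

lemma sum_range_multinomialTerm_div_succ (n : ℕ) :
    ∑ k ∈ range n, multinomialTerm k / (k + 1) = 9 * n / 2 * multinomialTerm n := by
  induction n with
  | zero => simp
  | succ n ih =>
    have hn : (n : ℚ) + 1 ≠ 0 := by positivity
    rw [sum_range_succ, ih, multinomialTerm_succ]
    push_cast
    field_simp
    ring

lemma closed_form_eq_multinomialTerm (m : ℕ) :
    (Nat.choose (m + 2) 2 : ℚ) * (Nat.choose (3 * m + 4) (m + 1) : ℚ) *
        (Nat.choose (2 * m + 3) (m + 1) : ℚ) / (3 : ℚ) ^ (3 * m + 1) / (3 * m + 4) =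
      9 * (m + 1) / 2 * multinomialTerm (m + 1) := by
  rw [Nat.cast_choose ℚ (by omega : 2 ≤ m + 2), Nat.cast_choose ℚ (by omega : m + 1 ≤ 3 * m + 4),
    Nat.cast_choose ℚ (by omega : m + 1 ≤ 2 * m + 3),
    show m + 2 - 2 = m by omega, show 3 * m + 4 - (m + 1) = 2 * m + 3 by omega,
    show 2 * m + 3 - (m + 1) = m + 2 by omega, multinomialTerm,
    show 3 * (m + 1) = 3 * m + 3 by ring, show 3 * m + 4 = 3 * m + 3 + 1 by ring,
    Nat.factorial_succ (3 * m + 3), Nat.factorial_succ (m + 1), Nat.factorial_succ m,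
    pow_succ]
  push_cast
  field_simp
  ring

/-- Closed form: ∑_{k=0}^m (3k)!/(k!^3) 3^(-3k)/(k+1)
  = C(m+2,2) C(3m+4,m+1) C(2m+3,m+1) 3^(-3m-1)/(3m+4). -/
theorem sum_f_closed_binom (m : ℕ) :
    ∑ k ∈ Finset.range (m + 1),
        ((3 * k).factorial : ℚ) / ((k.factorial : ℚ) ^ 3) / (3 : ℚ) ^ (3 * k) / (k + 1) =
      (Nat.choose (m + 2) 2 : ℚ) * (Nat.choose (3 * m + 4) (m + 1) : ℚ) *
        (Nat.choose (2 * m + 3) (m + 1) : ℚ) / (3 : ℚ) ^ (3 * m + 1) / (3 * m + 4) := by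
  rw [closed_form_eq_multinomialTerm]
  have h := sum_range_multinomialTerm_div_succ (m + 1)
  push_cast at h
  exact h
end

section
/- Let p ≥ 5 be prime and set m = floor((p-1)/3). Then the rational number S = sum_{k=0}^{m} (3k)!/(k!^3) * 3^(-3k)/(k+1) has p-adic valuation at least 1; i.e., p divides the numerator of S (written in lowest terms), equivalently S ≡ 0 mod p as a p-integral rational. -/
/-!
The partial sums telescope: the sum over `k < n` equals `9 n (3n)! / (2 (n!)³ 3^(3n))`,
because `9n/2 + 1/(n+1) = (3n+1)(3n+2) / (2(n+1))`.
For `n = ⌊(p-1)/3⌋ + 1` we have `n < p ≤ 3n`, so `p` divides `(3n)!` but not the denominator.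
-/

/-- Congruence of rationals: x ≡ y mod p^k in the p-integral rationals ℤ_(p). -/
def RatModCong (p k : ℕ) (x y : ℚ) : Prop :=
  ∃ a b : ℤ, ¬ (p : ℤ) ∣ b ∧ (x - y) * b = (p : ℚ) ^ k * a

open Finset

theorem sum_range_factorial_three_mul_div_eq (n : ℕ) :
    ∑ k ∈ range n, ((3 * k).factorial : ℚ) / (k.factorial : ℚ) ^ 3 / (3 : ℚ) ^ (3 * k) / (k + 1)
      = 9 * n * (3 * n).factorial / (2 * (n.factorial : ℚ) ^ 3 * 3 ^ (3 * n)) := by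
  induction n with
  | zero => simp
  | succ n ih =>
    rw [sum_range_succ, ih, show 3 * (n + 1) = 3 * n + 2 + 1 by ring]
    simp only [Nat.factorial_succ, pow_succ]
    push_cast
    field_simp
    ring

theorem ratModCong_zero_of_eq_div {p : ℕ} {x : ℚ} (k : ℕ) (a b : ℤ) (hb : ¬ (p : ℤ) ∣ b)
    (hx : x = (p : ℚ) ^ k * a / b) : RatModCong p k x 0 := by
  have hb0 : (b : ℚ) ≠ 0 := by rintro ⟨⟩; exact hb (dvd_zero _)
  exact ⟨a, b, hb, by rw [hx, sub_zero, div_mul_cancel₀ _ hb0]⟩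

theorem Nat.Prime.not_dvd_two_mul_factorial_pow_mul_three_pow {p : ℕ} (hp : p.Prime) (hp5 : 5 ≤ p)
    {n : ℕ} (hnp : n < p) (i j : ℕ) : ¬ p ∣ 2 * n.factorial ^ i * 3 ^ j := by
  simp only [hp.dvd_mul, not_or]
  refine ⟨⟨fun h => ?_, fun h => ?_⟩, fun h => ?_⟩
  · exact absurd (Nat.le_of_dvd two_pos h) (by omega)
  · exact absurd (hp.dvd_factorial.mp (hp.dvd_of_dvd_pow h)) (by omega)
  · exact absurd (Nat.le_of_dvd three_pos (hp.dvd_of_dvd_pow h)) (by omega)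

theorem ratModCong_sum_range_zero {p n : ℕ} (hp : p.Prime) (hp5 : 5 ≤ p) (hnp : n < p)
    (hpn : p ≤ 3 * n) :
    RatModCong p 1
      (∑ k ∈ range n, ((3 * k).factorial : ℚ) / (k.factorial : ℚ) ^ 3 / (3 : ℚ) ^ (3 * k) / (k + 1))
      0 := by
  obtain ⟨t, ht⟩ := Nat.dvd_factorial hp.pos hpn
  refine ratModCong_zero_of_eq_div 1 (9 * n * t) (2 * n.factorial ^ 3 * 3 ^ (3 * n)) ?_ ?_
  · exact_mod_cast hp.not_dvd_two_mul_factorial_pow_mul_three_pow hp5 hnp 3 (3 * n)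
  · rw [sum_range_factorial_three_mul_div_eq, ht]
    push_cast
    ring

/-- For a prime p ≥ 5 with m = ⌊(p-1)/3⌋, the sum
∑_{k=0}^m (3k)!/(k!^3) 3^(-3k)/(k+1) is ≡ 0 mod p as a p-integral rational. -/
theorem sum_f_cong_zero (p : ℕ) (hp : p.Prime) (hp5 : 5 ≤ p) :
    RatModCong p 1
      (∑ k ∈ Finset.range ((p - 1) / 3 + 1),
        ((3 * k).factorial : ℚ) / ((k.factorial : ℚ) ^ 3) / (3 : ℚ) ^ (3 * k) / (k + 1))
      0 :=
  ratModCong_sum_range_zero hp hp5 (by omega) (by omega)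
end

section
/- Let p ≥ 5 be prime and set m = floor((p-2)/3). Then the rational number sum_{k=0}^{m} (3k+1)!/(k! * k! * (k+1)!) * 3^(-3k)/(k+2) is congruent to 0 modulo p in the ring of p-integral rationals. -/
open Finset Nat

def gTerm (k : ℕ) : ℚ :=
  ((3 * k + 1)! : ℚ) / ((k ! : ℚ) * (k ! : ℚ) * ((k + 1)! : ℚ)) / (3 : ℚ) ^ (3 * k) / (k + 2)

def gSumDenom (m : ℕ) : ℕ :=
  4 ! * m ! * (m + 1)! * (m + 2)! * 3 ^ (3 * m)

theorem sum_range_gTerm (m : ℕ) :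
    ∑ k ∈ range (m + 1), gTerm k = ((3 * m + 4)! : ℚ) / gSumDenom m := by
  induction m with
  | zero => norm_num [gTerm, gSumDenom, Nat.factorial]
  | succ n ih =>
    rw [sum_range_succ, ih, gTerm, gSumDenom, gSumDenom,
      show 3 * (n + 1) + 4 = 3 * n + 4 + 1 + 1 + 1 by ring, show 3 * (n + 1) + 1 = 3 * n + 4 by ring,
      show 3 * (n + 1) = 3 * n + 3 by ring]
    simp only [Nat.factorial_succ, pow_add]
    push_cast
    field_simp
    ring

theorem Nat.Prime.coprime_gSumDenom {p m : ℕ} (hp : p.Prime) (hp5 : 5 ≤ p) (hm : m + 2 < p) :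
    p.Coprime (gSumDenom m) := by
  have h3 : p.Coprime 3 := (coprime_primes hp prime_three).mpr (by omega)
  refine .mul_right (.mul_right (.mul_right (.mul_right ?_ ?_) ?_) ?_) (h3.pow_right _)
  all_goals exact hp.coprime_factorial_of_lt (by omega)

theorem ratModCong_natCast_div_zero {p k a b : ℕ} (ha : p ^ k ∣ a) (hb : ¬ p ∣ b) :
    RatModCong p k ((a : ℚ) / b) 0 := by
  obtain ⟨c, rfl⟩ := ha
  have hb0 : (b : ℚ) ≠ 0 := Nat.cast_ne_zero.mpr (by rintro rfl; exact hb (dvd_zero p))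
  refine ⟨c, b, by exact_mod_cast hb, ?_⟩
  push_cast
  field_simp
  ring

/-- For a prime p ≥ 5 with m = ⌊(p-2)/3⌋, the sum
∑_{k=0}^m (3k+1)!/(k! k! (k+1)!) 3^(-3k)/(k+2) is ≡ 0 mod p as a p-integral rational. -/
theorem sum_g_cong_zero (p : ℕ) (hp : p.Prime) (hp5 : 5 ≤ p) :
    RatModCong p 1
      (∑ k ∈ Finset.range ((p - 2) / 3 + 1),
        ((3 * k + 1).factorial : ℚ) /
          ((k.factorial : ℚ) * (k.factorial : ℚ) * ((k + 1).factorial : ℚ)) /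
          (3 : ℚ) ^ (3 * k) / (k + 2))
      0 := by
  change RatModCong p 1 (∑ k ∈ range ((p - 2) / 3 + 1), gTerm k) 0
  rw [sum_range_gTerm]
  refine ratModCong_natCast_div_zero ?_ (hp.coprime_iff_not_dvd.mp ?_)
  · rw [pow_one]
    exact Nat.dvd_factorial hp.pos (by omega)
  · exact hp.coprime_gSumDenom hp5 (by omega)
end

section
/- Let p ≥ 5 be a prime and b_p(3) = (3^(p-1) - 1)/p the Fermat quotient of 3. Then b_p(3)/2 - p * b_p(3)^2 / 4 ≡ sum_{r=1}^{floor(p/3)} 1/(p - 3r) mod p^2, as a congruence of p-integral rationals. -/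
/-!
Write `q_k = ⌊3k/p⌋` and `r_k = 3k mod p` for `0 < k < p`. Since `k ↦ r_k` permutes
`1, …, p - 1`, we get `3^(p-1) = ∏ 3k / r_k = ∏ (1 + p q_k / r_k)`. The truncated logarithm
`L w = 2w - p w²` turns `(1 + p u)(1 + p v) = 1 + p w` into `L w ≡ L u + L v (mod p²)` for
`p`-integral `u, v`; hence `4 (b/2 - p b²/4) = L b ≡ ∑ L (q_k / r_k) (mod p²)`.

The `k` with `q_k = 2` are the `p - r` with `1 ≤ r ≤ p/3`, where `r_k = p - 3r`; they contribute
`4 ∑ 1/(p - 3r) - 4p ∑ 1/(p - 3r)²`. On the middle third (`q_k = 1`), pairing `k` with `p - k`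
pairs `s = 3k - p` with `p - s`, and `2/s + p/s² + 2/(p - s) + p/(p - s)² = p³/(s² (p - s)²)`.
What is left is `-2p (∑ 1/s² + 2 ∑ 1/(p - 3r)²)`, whose bracket is `≡ ∑_{0<k<p} 1/k² (mod p)`;
for `p ≥ 5` that sum vanishes mod `p`, because doubling permutes the nonzero residues.
-/

open Finset

section TruncLog

variable {R : Type*} [CommRing R]

/-- `(2 / π) * log (1 + π * w)`, truncated modulo `π ^ 2`. -/
def truncLog (π w : R) : R := 2 * w - π * w ^ 2

theorem map_truncLog {S F : Type*} [CommRing S] [FunLike F R S] [RingHomClass F R S] (f : F)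
    (π w : R) : f (truncLog π w) = truncLog (f π) (f w) := by
  simp only [truncLog, map_sub, map_mul, map_pow, map_ofNat]

theorem truncLog_add_add_mul (π u v : R) :
    truncLog π (u + v + π * u * v) =
      truncLog π u + truncLog π v - π ^ 2 * (u * v * (2 * (u + v) + π * u * v)) := by
  unfold truncLog
  ring

theorem exists_prod_one_add_mul_eq_and_dvd_truncLog {ι : Type*} (π : R) (s : Finset ι)
    (z : ι → R) :
    ∃ w, ∏ i ∈ s, (1 + π * z i) = 1 + π * w ∧
      π ^ 2 ∣ truncLog π w - ∑ i ∈ s, truncLog π (z i) := by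
  classical
  induction s using Finset.induction_on with
  | empty => exact ⟨0, by simp, by simp [truncLog]⟩
  | insert a s ha ih =>
    obtain ⟨w, hprod, hdvd⟩ := ih
    refine ⟨z a + w + π * z a * w, by rw [prod_insert ha, hprod]; ring, ?_⟩
    rw [sum_insert ha, truncLog_add_add_mul]
    convert dvd_sub hdvd (dvd_mul_right (π ^ 2) (z a * w * (2 * (z a + w) + π * z a * w)))
      using 1
    ring

end TruncLog

theorem sum_Ioc_three_mul_div_mod {M : Type*} [AddCommMonoid M] {p : ℕ} (hp : ¬ 3 ∣ p)
    (f : ℕ → ℤ → M) :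
    ∑ k ∈ Ioc 0 (p - 1), f (3 * k / p) (3 * k % p : ℕ) =
      ∑ r ∈ Ioc 0 (p / 3), f 0 (3 * r) + ∑ k ∈ Ioc (p / 3) (2 * p / 3), f 1 (3 * k - p) +
        ∑ r ∈ Ioc 0 (p / 3), f 2 (p - 3 * r) := by
  have key : ∀ k q : ℕ, q * p ≤ 3 * k → 3 * k < (q + 1) * p →
      f (3 * k / p) (3 * k % p : ℕ) = f q (3 * k - q * p) := by
    intro k q h1 h2
    have hq := Nat.div_eq_of_lt_le h1 h2
    have hdm : (p : ℤ) * (3 * k / p : ℕ) + (3 * k % p : ℕ) = 3 * k := by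
      exact_mod_cast Nat.div_add_mod (3 * k) p
    rw [hq] at hdm ⊢
    congr 1
    linarith
  rw [← sum_Ioc_consecutive _ (Nat.zero_le _) (show 2 * p / 3 ≤ p - 1 by omega),
    ← sum_Ioc_consecutive _ (Nat.zero_le _) (show p / 3 ≤ 2 * p / 3 by omega)]
  congr 1
  · congr 1
    · refine sum_congr rfl fun k hk => ?_
      rw [mem_Ioc] at hk
      rw [key k 0 (by omega) (by omega)]
      simp
    · refine sum_congr rfl fun k hk => ?_
      rw [mem_Ioc] at hk
      rw [key k 1 (by omega) (by omega)]
      simp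
  · refine sum_nbij' (p - ·) (p - ·) ?_ ?_ ?_ ?_ fun k hk => ?_
    any_goals intro k hk; simp only [mem_Ioc] at hk ⊢; omega
    rw [mem_Ioc] at hk
    rw [key k 2 (by omega) (by omega), Nat.cast_sub (by omega)]
    congr 1
    push_cast
    ring

theorem add_div_sq_add_add_div_sq {K : Type*} [Field K] {π s t : K} (hs : s ≠ 0) (ht : t ≠ 0)
    (hst : s + t = π) :
    (2 / s + π / s ^ 2) + (2 / t + π / t ^ 2) = π ^ 3 / (s ^ 2 * t ^ 2) := by
  subst hst
  field_simp
  ring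

section PadicNorm

variable {p : ℕ} [Fact p.Prime]

theorem not_three_dvd_of_five_le (hp5 : 5 ≤ p) : ¬ 3 ∣ p := fun h => by
  have := (Nat.prime_dvd_prime_iff_eq Nat.prime_three Fact.out).1 h
  omega

variable (p) in
def pIntegers : Subring ℚ where
  carrier := {x | padicNorm p x ≤ 1}
  mul_mem' {x y} hx hy := by
    simpa only [Set.mem_ofPred_eq, padicNorm.mul] using mul_le_one₀ hx (padicNorm.nonneg y) hy
  one_mem' := by simp
  add_mem' hx hy := padicNorm.nonarchimedean.trans (max_le hx hy)
  zero_mem' := by simp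
  neg_mem' := by simp [padicNorm.neg]

theorem padicNorm_pow_mul (k : ℕ) (x : ℚ) :
    padicNorm p ((p : ℚ) ^ k * x) = (p : ℚ)⁻¹ ^ k * padicNorm p x := by
  rw [padicNorm.mul, IsAbsoluteValue.abv_pow (padicNorm p), padicNorm.padicNorm_p_of_prime]

theorem padicNorm_intCast_eq_one {n : ℤ} (h0 : 0 < n) (hn : n < p) : padicNorm p n = 1 :=
  (padicNorm.int_eq_one_iff n).2 fun h => absurd (Int.le_of_dvd h0 h) (by omega)

theorem padicNorm_le_of_pow_dvd {k : ℕ} {x : pIntegers p} (h : (p : pIntegers p) ^ k ∣ x) :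
    padicNorm p x ≤ (p : ℚ)⁻¹ ^ k := by
  obtain ⟨c, rfl⟩ := h
  rw [Subring.coe_mul, Subring.coe_pow, Subring.coe_natCast, padicNorm_pow_mul]
  exact mul_le_of_le_one_right (by positivity) c.2

theorem padicNorm_truncLog_sub_sum_le {ι : Type*} (s : Finset ι) (z : ι → ℚ)
    (hz : ∀ i ∈ s, padicNorm p (z i) ≤ 1) {w : ℚ} (hw : ∏ i ∈ s, (1 + p * z i) = 1 + p * w) :
    padicNorm p (truncLog (p : ℚ) w - ∑ i ∈ s, truncLog (p : ℚ) (z i)) ≤ (p : ℚ)⁻¹ ^ 2 := by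
  obtain ⟨w', hprod, hdvd⟩ := exists_prod_one_add_mul_eq_and_dvd_truncLog (p : pIntegers p)
    s.attach fun i => ⟨z i, hz i i.2⟩
  have hw' : (pIntegers p).subtype w' = w := by
    have := congrArg (pIntegers p).subtype hprod
    simp only [map_prod, map_add, map_one, map_mul, map_natCast, Subring.subtype_apply] at this
    rw [prod_attach s fun i => 1 + p * z i, hw] at this
    exact (mul_left_cancel₀ (Nat.cast_ne_zero.2 (Fact.out : p.Prime).ne_zero)
      (add_left_cancel this)).symm
  have := padicNorm_le_of_pow_dvd hdvd
  rw [← Subring.subtype_apply, map_sub, map_sum, map_truncLog, map_natCast, hw'] at this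
  simp only [map_truncLog, map_natCast, Subring.subtype_apply] at this
  rwa [sum_attach s fun i => truncLog (p : ℚ) (z i)] at this

theorem ratModCong_of_padicNorm_sub_le {k : ℕ} {x y : ℚ}
    (h : padicNorm p (x - y) ≤ (p : ℚ)⁻¹ ^ k) : RatModCong p k x y := by
  have hp := (Fact.out : p.Prime)
  set q := x - y
  have hnorm : padicNorm p q * padicNorm p q.den = padicNorm p q.num := by
    rw [← padicNorm.mul, Rat.mul_den_eq_num]
  have hle : padicNorm p q ≤ 1 :=
    h.trans (pow_le_one₀ (by positivity) (inv_le_one_of_one_le₀ (mod_cast hp.one_le)))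
  have hden : ¬ p ∣ q.den := by
    intro hd
    have hnum : ¬ (p : ℤ) ∣ q.num := fun hn => hp.one_lt.ne' <|
      Nat.Coprime.eq_one_of_dvd (Nat.Coprime.coprime_dvd_left (Int.natCast_dvd.1 hn) q.reduced) hd
    rw [(padicNorm.int_eq_one_iff _).2 hnum] at hnorm
    have := (padicNorm.nat_lt_one_iff _).2 hd
    linarith [mul_le_of_le_one_left (padicNorm.nonneg (p := p) (q.den : ℚ)) hle]
  rw [(padicNorm.nat_eq_one_iff _).2 hden, mul_one] at hnorm
  obtain ⟨a, ha⟩ := padicNorm.dvd_iff_norm_le.2 (show padicNorm p q.num ≤ (p : ℚ) ^ (-k : ℤ) by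
    rwa [zpow_neg, zpow_natCast, ← inv_pow, ← hnorm])
  refine ⟨a, q.den, mod_cast hden, ?_⟩
  rw [Int.cast_natCast, Rat.mul_den_eq_num, ha]
  push_cast
  ring

theorem mul_mod_mem_Ioc {a k : ℕ} (ha : ¬ p ∣ a) (hk : k ∈ Ioc 0 (p - 1)) :
    a * k % p ∈ Ioc 0 (p - 1) := by
  have hp := (Fact.out : p.Prime)
  rw [mem_Ioc] at hk ⊢
  have hne : a * k % p ≠ 0 := fun h =>
    ((Nat.Prime.dvd_mul hp).1 (Nat.dvd_of_mod_eq_zero h)).elim ha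
      fun h => absurd (Nat.le_of_dvd hk.1 h) (by omega)
  have := Nat.mod_lt (a * k) hp.pos
  omega

theorem bijOn_mul_mod_Ioc {a : ℕ} (ha : ¬ p ∣ a) :
    Set.BijOn (a * · % p) (Ioc 0 (p - 1) : Set ℕ) (Ioc 0 (p - 1)) := by
  have hp := (Fact.out : p.Prime)
  have hmaps : Set.MapsTo (a * · % p) (Ioc 0 (p - 1) : Set ℕ) (Ioc 0 (p - 1)) :=
    fun k hk => mul_mod_mem_Ioc ha hk
  have hinj : Set.InjOn (a * · % p) (Ioc 0 (p - 1) : Set ℕ) := by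
    intro k hk l hl hkl
    simp only [coe_Ioc, Set.mem_Ioc] at hk hl
    have := Nat.ModEq.cancel_left_of_coprime (hp.coprime_iff_not_dvd.2 ha) hkl
    rwa [Nat.ModEq, Nat.mod_eq_of_lt (by omega), Nat.mod_eq_of_lt (by omega)] at this
  exact ⟨hmaps, hinj, surjOn_of_injOn_of_card_le _ hmaps hinj le_rfl⟩

theorem prod_Ioc_mul_mod {M : Type*} [CommMonoid M] {a : ℕ} (ha : ¬ p ∣ a) (f : ℕ → M) :
    ∏ k ∈ Ioc 0 (p - 1), f (a * k % p) = ∏ k ∈ Ioc 0 (p - 1), f k :=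
  have h := bijOn_mul_mod_Ioc ha
  prod_nbij _ (fun _ hk => h.mapsTo hk) h.injOn h.surjOn fun _ _ => rfl

theorem sum_Ioc_mul_mod {M : Type*} [AddCommMonoid M] {a : ℕ} (ha : ¬ p ∣ a) (f : ℕ → M) :
    ∑ k ∈ Ioc 0 (p - 1), f (a * k % p) = ∑ k ∈ Ioc 0 (p - 1), f k :=
  have h := bijOn_mul_mod_Ioc ha
  sum_nbij _ (fun _ hk => h.mapsTo hk) h.injOn h.surjOn fun _ _ => rfl

theorem pow_sub_one_eq_prod_one_add {a : ℕ} (ha : ¬ p ∣ a) :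
    (a : ℚ) ^ (p - 1) =
      ∏ k ∈ Ioc 0 (p - 1), (1 + p * ((a * k / p : ℕ) / (a * k % p : ℕ) : ℚ)) := by
  have hr : ∀ k ∈ Ioc 0 (p - 1), ((a * k % p : ℕ) : ℚ) ≠ 0 := fun k hk =>
    Nat.cast_ne_zero.2 (mem_Ioc.1 (mul_mod_mem_Ioc ha hk)).1.ne'
  have hfactor : ∀ k ∈ Ioc 0 (p - 1),
      1 + p * ((a * k / p : ℕ) / (a * k % p : ℕ) : ℚ) = (a * k : ℕ) / (a * k % p : ℕ) := by
    intro k hk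
    have hdiv : ((a * k : ℕ) : ℚ) = p * (a * k / p : ℕ) + (a * k % p : ℕ) := by
      exact_mod_cast (Nat.div_add_mod (a * k) p).symm
    rw [hdiv]
    field_simp [hr k hk]
    ring
  have hfact : ∏ k ∈ Ioc 0 (p - 1), (k : ℚ) ≠ 0 :=
    prod_ne_zero_iff.2 fun k hk => Nat.cast_ne_zero.2 (mem_Ioc.1 hk).1.ne'
  have hperm : ∏ k ∈ Ioc 0 (p - 1), ((a * k % p : ℕ) : ℚ) = ∏ k ∈ Ioc 0 (p - 1), (k : ℚ) :=
    prod_Ioc_mul_mod ha _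
  rw [prod_congr rfl hfactor, prod_div_distrib, hperm]
  push_cast
  rw [prod_mul_distrib, prod_const, Nat.card_Ioc, Nat.sub_zero, mul_div_assoc, div_self hfact,
    mul_one]

theorem padicNorm_truncLog_fermatQuotient_sub_le {a : ℕ} (ha : ¬ p ∣ a) {b : ℚ}
    (hb : (a : ℚ) ^ (p - 1) = 1 + p * b) :
    padicNorm p (truncLog (p : ℚ) b -
      ∑ k ∈ Ioc 0 (p - 1), truncLog (p : ℚ) ((a * k / p : ℕ) / (a * k % p : ℕ))) ≤
        (p : ℚ)⁻¹ ^ 2 := by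
  refine padicNorm_truncLog_sub_sum_le _ _ (fun k hk => ?_)
    ((pow_sub_one_eq_prod_one_add ha).symm.trans hb)
  have hr := mem_Ioc.1 (mul_mod_mem_Ioc ha hk)
  rw [padicNorm.div, ← Int.cast_natCast (a * k % p),
    padicNorm_intCast_eq_one (by omega) (by omega), div_one]
  exact padicNorm.of_nat _

theorem padicNorm_one_div_sq_sub_le {u v : ℤ} (hu : padicNorm p u = 1) (hv : padicNorm p v = 1)
    (huv : (p : ℤ) ∣ u ^ 2 - v ^ 2) :
    padicNorm p (1 / (u : ℚ) ^ 2 - 1 / (v : ℚ) ^ 2) ≤ (p : ℚ)⁻¹ := by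
  obtain ⟨c, hc⟩ := huv
  have hu0 : (u : ℚ) ≠ 0 := fun h => by simp [h] at hu
  have hv0 : (v : ℚ) ≠ 0 := fun h => by simp [h] at hv
  have hcq : (u : ℚ) ^ 2 - v ^ 2 = p * c := by exact_mod_cast hc
  have : 1 / (u : ℚ) ^ 2 - 1 / (v : ℚ) ^ 2 = (p : ℚ) ^ 1 * (-c / (u ^ 2 * v ^ 2)) := by
    field_simp
    linear_combination -hcq
  rw [this, padicNorm_pow_mul, pow_one, padicNorm.div, padicNorm.mul,
    IsAbsoluteValue.abv_pow (padicNorm p), IsAbsoluteValue.abv_pow (padicNorm p), hu, hv,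
    one_pow, mul_one, div_one, ← Int.cast_neg]
  exact mul_le_of_le_one_right (by positivity) (padicNorm.of_int _)

theorem padicNorm_sum_one_div_sq_le (hp5 : 5 ≤ p) :
    padicNorm p (∑ k ∈ Ioc 0 (p - 1), 1 / (k : ℚ) ^ 2) ≤ (p : ℚ)⁻¹ := by
  have h2 : padicNorm p 2 = 1 := by
    simpa using padicNorm_intCast_eq_one (p := p) (n := 2) (by norm_num) (by omega)
  have h3 : padicNorm p 3 = 1 := by
    simpa using padicNorm_intCast_eq_one (p := p) (n := 3) (by norm_num) (by omega)
  have h4 : padicNorm p 4 = 1 := by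
    simpa using padicNorm_intCast_eq_one (p := p) (n := 4) (by norm_num) (by omega)
  have hp2 : ¬ p ∣ 2 := Nat.not_dvd_of_pos_of_lt (by norm_num) (by omega)
  set S := ∑ k ∈ Ioc 0 (p - 1), 1 / (k : ℚ) ^ 2
  have hperm : ∑ k ∈ Ioc 0 (p - 1), 1 / ((2 * k % p : ℕ) : ℚ) ^ 2 = S :=
    sum_Ioc_mul_mod hp2 fun r => 1 / (r : ℚ) ^ 2
  have hS : 3 * S = 4 * ∑ k ∈ Ioc 0 (p - 1),
      (1 / (((2 * k % p : ℕ) : ℤ) : ℚ) ^ 2 - 1 / (((2 * k : ℕ) : ℤ) : ℚ) ^ 2) := by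
    have hquarter : 4 * ∑ k ∈ Ioc 0 (p - 1), 1 / ((2 * k : ℕ) : ℚ) ^ 2 = S := by
      rw [mul_sum]
      exact sum_congr rfl fun k _ => by push_cast; ring
    simp only [Int.cast_natCast]
    rw [sum_sub_distrib, hperm]
    linear_combination hquarter
  have hterm : ∀ k ∈ Ioc 0 (p - 1), padicNorm p
      (1 / (((2 * k % p : ℕ) : ℤ) : ℚ) ^ 2 - 1 / (((2 * k : ℕ) : ℤ) : ℚ) ^ 2) ≤ (p : ℚ)⁻¹ := by
    intro k hk
    have hr := mem_Ioc.1 (mul_mod_mem_Ioc hp2 hk)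
    rw [mem_Ioc] at hk
    refine padicNorm_one_div_sq_sub_le (padicNorm_intCast_eq_one (by omega) (by omega)) ?_ ?_
    · push_cast
      rw [padicNorm.mul, h2, one_mul, ← Int.cast_natCast,
        padicNorm_intCast_eq_one (by omega) (by omega)]
    · have : (p : ℤ) * (2 * k / p : ℕ) + (2 * k % p : ℕ) = (2 * k : ℕ) := by
        exact_mod_cast Nat.div_add_mod (2 * k) p
      refine ⟨-(2 * k / p : ℕ) * ((2 * k % p : ℕ) + (2 * k : ℕ)), ?_⟩
      linear_combination (((2 * k % p : ℕ) : ℤ) + (2 * k : ℕ)) * this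
  calc padicNorm p S = padicNorm p (3 * S) := by rw [padicNorm.mul, h3, one_mul]
    _ ≤ (p : ℚ)⁻¹ := by
      rw [hS, padicNorm.mul, h4, one_mul]
      exact padicNorm.sum_le' hterm (by positivity)

theorem padicNorm_sum_middle_third_le (hp5 : 5 ≤ p) :
    padicNorm p (∑ k ∈ Ioc (p / 3) (2 * p / 3),
      (2 / (3 * k - p : ℚ) + p / (3 * k - p : ℚ) ^ 2)) ≤ (p : ℚ)⁻¹ ^ 3 := by
  have hp3 := not_three_dvd_of_five_le (p := p) hp5
  have h2 : padicNorm p 2 = 1 := by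
    simpa using padicNorm_intCast_eq_one (p := p) (n := 2) (by norm_num) (by omega)
  set g : ℕ → ℚ := fun k => 2 / (3 * k - p : ℚ) + p / (3 * k - p : ℚ) ^ 2
  have hsymm : ∑ k ∈ Ioc (p / 3) (2 * p / 3), g k =
      ∑ k ∈ Ioc (p / 3) (2 * p / 3), g (p - k) := by
    refine sum_nbij' (p - ·) (p - ·) ?_ ?_ ?_ ?_ fun k hk => ?_
    any_goals intro k hk; simp only [mem_Ioc] at hk ⊢; omega
    simp only [mem_Ioc] at hk
    rw [Nat.sub_sub_self (by omega)]
  have hpair : ∀ k ∈ Ioc (p / 3) (2 * p / 3), g k + g (p - k) =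
      (p : ℚ) ^ 3 * (1 / ((3 * k - p : ℤ) : ℚ) ^ 2 * (1 / ((2 * p - 3 * k : ℤ) : ℚ) ^ 2)) := by
    intro k hk
    rw [mem_Ioc] at hk
    have hs : (3 * k - p : ℚ) ≠ 0 := by
      have : (p : ℚ) < 3 * k := by exact_mod_cast (show p < 3 * k by omega)
      linarith
    have ht : (2 * p - 3 * k : ℚ) ≠ 0 := by
      have : (3 * k : ℚ) < 2 * p := by exact_mod_cast (show 3 * k < 2 * p by omega)
      linarith
    simp only [g]
    rw [Nat.cast_sub (by omega), show (3 * ((p : ℚ) - k) - p) = 2 * p - 3 * k by ring,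
      add_div_sq_add_add_div_sq hs ht (by ring)]
    push_cast
    field_simp
  have hunit : ∀ k ∈ Ioc (p / 3) (2 * p / 3),
      padicNorm p (1 / ((3 * k - p : ℤ) : ℚ) ^ 2 * (1 / ((2 * p - 3 * k : ℤ) : ℚ) ^ 2)) ≤ 1 := by
    intro k hk
    rw [mem_Ioc] at hk
    rw [padicNorm.mul, padicNorm.div, padicNorm.div, IsAbsoluteValue.abv_pow (padicNorm p),
      IsAbsoluteValue.abv_pow (padicNorm p), padicNorm_intCast_eq_one (by omega) (by omega),
      padicNorm_intCast_eq_one (by omega) (by omega)]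
    norm_num
  calc padicNorm p (∑ k ∈ Ioc (p / 3) (2 * p / 3), g k)
      = padicNorm p (∑ k ∈ Ioc (p / 3) (2 * p / 3), (g k + g (p - k))) := by
        rw [← one_mul (padicNorm p _), ← h2, ← padicNorm.mul, two_mul]
        nth_rewrite 2 [hsymm]
        rw [← sum_add_distrib]
    _ ≤ (p : ℚ)⁻¹ ^ 3 := padicNorm.sum_le' (fun k hk => by
        rw [hpair k hk, padicNorm_pow_mul]
        exact mul_le_of_le_one_right (by positivity) (hunit k hk)) (by positivity)

theorem padicNorm_sum_middle_third_one_div_sq_add_le (hp5 : 5 ≤ p) :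
    padicNorm p (∑ k ∈ Ioc (p / 3) (2 * p / 3), 1 / (3 * k - p : ℚ) ^ 2 +
      2 * ∑ r ∈ Ioc 0 (p / 3), 1 / (p - 3 * r : ℚ) ^ 2) ≤ (p : ℚ)⁻¹ := by
  have hp3 := not_three_dvd_of_five_le (p := p) hp5
  have hsplit := sum_Ioc_three_mul_div_mod hp3 fun _ r => 1 / (r : ℚ) ^ 2
  simp only [Int.cast_natCast] at hsplit
  push_cast at hsplit
  have hperm : ∑ k ∈ Ioc 0 (p - 1), 1 / ((3 * k % p : ℕ) : ℚ) ^ 2 =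
      ∑ k ∈ Ioc 0 (p - 1), 1 / (k : ℚ) ^ 2 :=
    sum_Ioc_mul_mod (a := 3) (Nat.not_dvd_of_pos_of_lt (by norm_num) (by omega))
      fun r => 1 / (r : ℚ) ^ 2
  have hF : ∑ k ∈ Ioc (p / 3) (2 * p / 3), 1 / (3 * k - p : ℚ) ^ 2 +
      2 * ∑ r ∈ Ioc 0 (p / 3), 1 / (p - 3 * r : ℚ) ^ 2 = ∑ k ∈ Ioc 0 (p - 1), 1 / (k : ℚ) ^ 2 +
        ∑ r ∈ Ioc 0 (p / 3), (1 / ((p - 3 * r : ℤ) : ℚ) ^ 2 - 1 / ((3 * r : ℤ) : ℚ) ^ 2) := by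
    push_cast
    rw [sum_sub_distrib, ← hperm, hsplit]
    ring
  rw [hF]
  refine padicNorm.nonarchimedean.trans (max_le (padicNorm_sum_one_div_sq_le hp5)
    (padicNorm.sum_le' (fun r hr => ?_) (by positivity)))
  rw [mem_Ioc] at hr
  exact padicNorm_one_div_sq_sub_le (padicNorm_intCast_eq_one (by omega) (by omega))
    (padicNorm_intCast_eq_one (by omega) (by omega)) ⟨p - 6 * r, by ring⟩

theorem padicNorm_sum_truncLog_three_sub_le (hp5 : 5 ≤ p) :
    padicNorm p (∑ k ∈ Ioc 0 (p - 1), truncLog (p : ℚ) ((3 * k / p : ℕ) / (3 * k % p : ℕ)) -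
      4 * ∑ r ∈ Ioc 0 (p / 3), 1 / (p - 3 * r : ℚ)) ≤ (p : ℚ)⁻¹ ^ 2 := by
  have hsplit := sum_Ioc_three_mul_div_mod (not_three_dvd_of_five_le hp5)
    fun q r => truncLog (p : ℚ) (q / r)
  simp only [Int.cast_natCast] at hsplit
  push_cast at hsplit
  have hzero : ∑ r ∈ Ioc 0 (p / 3), truncLog (p : ℚ) (0 / (3 * r)) = 0 := by
    simp [truncLog]
  have hmiddle : ∑ k ∈ Ioc (p / 3) (2 * p / 3), truncLog (p : ℚ) (1 / (3 * k - p)) =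
      ∑ k ∈ Ioc (p / 3) (2 * p / 3), (2 / (3 * k - p : ℚ) + p / (3 * k - p : ℚ) ^ 2) -
        2 * p * ∑ k ∈ Ioc (p / 3) (2 * p / 3), 1 / (3 * k - p : ℚ) ^ 2 := by
    rw [mul_sum, ← sum_sub_distrib]
    exact sum_congr rfl fun k _ => by unfold truncLog; rw [div_pow]; ring
  have hupper : ∑ r ∈ Ioc 0 (p / 3), truncLog (p : ℚ) (2 / (p - 3 * r)) =
      4 * ∑ r ∈ Ioc 0 (p / 3), 1 / (p - 3 * r : ℚ) -
        4 * p * ∑ r ∈ Ioc 0 (p / 3), 1 / (p - 3 * r : ℚ) ^ 2 := by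
    rw [mul_sum, mul_sum, ← sum_sub_distrib]
    exact sum_congr rfl fun r _ => by unfold truncLog; rw [div_pow]; ring
  rw [hsplit, hzero, hmiddle, hupper, show ∀ E F G β : ℚ,
    0 + (E - 2 * p * F) + (4 * β - 4 * p * G) - 4 * β = E - (p : ℚ) ^ 1 * (2 * (F + 2 * G)) by
      intros; ring]
  have hp1 : (p : ℚ)⁻¹ ≤ 1 := inv_le_one_of_one_le₀ (mod_cast (Fact.out : p.Prime).one_le)
  have h2 : padicNorm p 2 ≤ 1 := mod_cast padicNorm.of_nat (p := p) 2
  refine padicNorm.sub.trans (max_le ((padicNorm_sum_middle_third_le hp5).trans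
    (pow_le_pow_of_le_one (by positivity) hp1 (by norm_num))) ?_)
  rw [padicNorm_pow_mul, padicNorm.mul, pow_one, sq]
  exact mul_le_mul_of_nonneg_left ((mul_le_of_le_one_left (padicNorm.nonneg _) h2).trans
    (padicNorm_sum_middle_third_one_div_sq_add_le hp5)) (by positivity)

end PadicNorm

/-- Lehmer: for p ≥ 5 prime and b = (3^(p-1)-1)/p the Fermat quotient of 3,
b/2 - p b²/4 ≡ ∑_{r=1}^{⌊p/3⌋} 1/(p-3r) mod p². -/
theorem lehmer_fermat_quotient (p : ℕ) (hp : p.Prime) (hp5 : 5 ≤ p)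
    (b : ℤ) (hb : (p : ℤ) * b = 3 ^ (p - 1) - 1) :
    RatModCong p 2 ((b : ℚ) / 2 - (p : ℚ) * (b : ℚ) ^ 2 / 4)
      (∑ r ∈ Finset.Icc 1 (p / 3), 1 / ((p : ℚ) - 3 * (r : ℚ))) := by
  have := Fact.mk hp
  have hbQ : ((3 : ℕ) : ℚ) ^ (p - 1) = 1 + p * b := by
    have : ((p * b : ℤ) : ℚ) = ((3 ^ (p - 1) - 1 : ℤ) : ℚ) := congrArg _ hb
    push_cast at this
    rw [Nat.cast_ofNat]
    linarith
  have hlog := padicNorm_truncLog_fermatQuotient_sub_le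
    (Nat.not_dvd_of_pos_of_lt (by norm_num) (by omega)) hbQ
  have h4 : padicNorm p 4 = 1 := by
    simpa using padicNorm_intCast_eq_one (p := p) (n := 4) (by norm_num) (by omega)
  apply ratModCong_of_padicNorm_sub_le
  rw [show Icc 1 (p / 3) = Ioc 0 (p / 3) from Icc_add_one_left_eq_Ioc 0 _,
    show ∀ β : ℚ, (b : ℚ) / 2 - p * b ^ 2 / 4 - β = (truncLog (p : ℚ) b - 4 * β) / 4 by
      intro; unfold truncLog; ring,
    padicNorm.div, h4, div_one, ← sub_add_sub_cancel _ (∑ k ∈ Ioc 0 (p - 1),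
      truncLog (p : ℚ) ((3 * k / p : ℕ) / (3 * k % p : ℕ)))]
  exact padicNorm.nonarchimedean.trans (max_le hlog (padicNorm_sum_truncLog_three_sub_le hp5))
end

section
/- Let p ≥ 5 be prime and n a positive integer. Then 3 * (3^((p-1)n) - 1)/p ≡ -2n * H(floor(p/3)) mod p, where H(m) = sum_{j=1}^m 1/j is the m-th harmonic number, the congruence being between p-integral rationals. -/
open Finset

section SquareZero

variable {R : Type*} [CommRing R] {ε : R}

theorem prod_one_add_mul_of_mul_self_eq_zero {ι : Type*} (hε : ε * ε = 0) (s : Finset ι)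
    (x : ι → R) : ∏ i ∈ s, (1 + ε * x i) = 1 + ε * ∑ i ∈ s, x i := by
  classical
  induction s using Finset.induction_on with
  | empty => simp
  | insert a s ha ih =>
    rw [prod_insert ha, sum_insert ha, ih]
    linear_combination x a * (∑ i ∈ s, x i) * hε

theorem one_add_mul_pow_of_mul_self_eq_zero (hε : ε * ε = 0) (x : R) (n : ℕ) :
    (1 + ε * x) ^ n = 1 + n * ε * x := by
  simpa [mul_left_comm, mul_assoc] using
    prod_one_add_mul_of_mul_self_eq_zero hε (range n) fun _ ↦ x

end SquareZero

namespace ZMod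

variable {p : ℕ}

theorem natCast_ne_zero_of_pos_of_lt {j : ℕ} (h0 : 0 < j) (hj : j < p) : (j : ZMod p) ≠ 0 := by
  rw [Ne, natCast_eq_zero_iff]
  exact Nat.not_dvd_of_pos_of_lt h0 hj

theorem natCast_mul_self_eq_zero : (p : ZMod (p ^ 2)) * p = 0 := by
  rw [← Nat.cast_mul, ← sq, natCast_self]

theorem castHom_eq_of_natCast_mul_eq [NeZero p] {x y : ZMod (p ^ 2)}
    (h : (p : ZMod (p ^ 2)) * x = (p : ZMod (p ^ 2)) * y) :
    castHom (dvd_pow_self p two_ne_zero) (ZMod p) x =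
      castHom (dvd_pow_self p two_ne_zero) (ZMod p) y := by
  rw [← natCast_zmod_val x, ← natCast_zmod_val y] at h ⊢
  rw [← Nat.cast_mul, ← Nat.cast_mul, natCast_eq_natCast_iff] at h
  rw [map_natCast, map_natCast, natCast_eq_natCast_iff]
  exact Nat.ModEq.mul_left_cancel' (NeZero.ne p) (by rwa [← sq])

theorem map_inv_of_isUnit {n : ℕ} {K : Type*} [DivisionRing K] (f : ZMod n →+* K) {u : ZMod n}
    (hu : IsUnit u) : f u⁻¹ = (f u)⁻¹ :=
  eq_inv_of_mul_eq_one_left (by rw [← map_mul, inv_mul_of_unit u hu, map_one])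

end ZMod

namespace Nat.Prime

variable {p a : ℕ}

theorem isUnit_natCast_of_mem_Icc (hp : p.Prime) (k : ℕ) {j : ℕ} (hj : j ∈ Icc 1 (p - 1)) :
    IsUnit (j : ZMod (p ^ k)) := by
  rw [mem_Icc] at hj
  rw [ZMod.isUnit_iff_coprime]
  exact Nat.Coprime.pow_right k <| Nat.coprime_comm.mp <|
    hp.coprime_iff_not_dvd.mpr (Nat.not_dvd_of_pos_of_lt (by omega) (by omega))

theorem mul_mod_mem_Icc (hp : p.Prime) (ha : ¬ p ∣ a) {j : ℕ} (hj : j ∈ Icc 1 (p - 1)) :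
    a * j % p ∈ Icc 1 (p - 1) := by
  rw [mem_Icc] at hj ⊢
  have hj' : ¬ p ∣ j := Nat.not_dvd_of_pos_of_lt (by omega) (by omega)
  have hmod : a * j % p ≠ 0 := fun h ↦ (hp.dvd_mul.mp (Nat.dvd_of_mod_eq_zero h)).elim ha hj'
  have := Nat.mod_lt (a * j) hp.pos
  omega

theorem prod_Icc_mul_mod {M : Type*} [CommMonoid M] (hp : p.Prime) (ha : ¬ p ∣ a)
    (f : ℕ → M) :
    ∏ j ∈ Icc 1 (p - 1), f (a * j % p) = ∏ j ∈ Icc 1 (p - 1), f j := by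
  have hmaps : Set.MapsTo (fun j ↦ a * j % p) (Icc 1 (p - 1)) (Icc 1 (p - 1)) :=
    fun j hj ↦ hp.mul_mod_mem_Icc ha hj
  have hinj : Set.InjOn (fun j ↦ a * j % p) (Icc 1 (p - 1)) := by
    intro i hi j hj hij
    simp only [coe_Icc, Set.mem_Icc] at hi hj
    have hij' : i ≡ j [MOD p] :=
      Nat.ModEq.cancel_left_of_coprime (hp.coprime_iff_not_dvd.mpr ha) hij
    exact hij'.eq_of_lt_of_lt (by omega) (by omega)
  exact prod_nbij _ hmaps hinj (surjOn_of_injOn_of_card_le _ hmaps hinj le_rfl) fun _ _ ↦ rfl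

-- `ZMod (p ^ 2)` is not a field; its `⁻¹` is a true inverse here since `a * j % p` is a unit.
theorem natCast_pow_sub_one_eq_one_add_mul_sum (hp : p.Prime) (ha : ¬ p ∣ a) :
    (a : ZMod (p ^ 2)) ^ (p - 1) = 1 + p * ∑ j ∈ Icc 1 (p - 1),
      ((a * j / p : ℕ) : ZMod (p ^ 2)) * ((a * j % p : ℕ) : ZMod (p ^ 2))⁻¹ := by
  have hfactor : ∀ j ∈ Icc 1 (p - 1), ((a * j : ℕ) : ZMod (p ^ 2)) =
      ((a * j % p : ℕ) : ZMod (p ^ 2)) *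
        (1 + p * (((a * j / p : ℕ) : ZMod (p ^ 2)) *
          ((a * j % p : ℕ) : ZMod (p ^ 2))⁻¹)) := by
    intro j hj
    have hr := ZMod.mul_inv_of_unit _
      (hp.isUnit_natCast_of_mem_Icc 2 (hp.mul_mod_mem_Icc ha hj))
    conv_lhs => rw [← Nat.mod_add_div (a * j) p]
    push_cast
    linear_combination (-(p : ZMod (p ^ 2)) * ((a * j / p : ℕ) : ZMod (p ^ 2))) * hr
  have hunit : IsUnit (∏ j ∈ Icc 1 (p - 1), (j : ZMod (p ^ 2))) :=
    IsUnit.prod_iff.mpr fun j hj ↦ hp.isUnit_natCast_of_mem_Icc 2 hj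
  refine hunit.mul_left_inj.mp ?_
  calc (a : ZMod (p ^ 2)) ^ (p - 1) * ∏ j ∈ Icc 1 (p - 1), (j : ZMod (p ^ 2))
      = ∏ j ∈ Icc 1 (p - 1), ((a * j : ℕ) : ZMod (p ^ 2)) := by
        simp only [Nat.cast_mul, prod_mul_distrib, prod_const, Nat.card_Icc,
          Nat.add_sub_cancel]
    _ = (∏ j ∈ Icc 1 (p - 1), ((a * j % p : ℕ) : ZMod (p ^ 2))) * ∏ j ∈ Icc 1 (p - 1),
          (1 + p * (((a * j / p : ℕ) : ZMod (p ^ 2)) *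
            ((a * j % p : ℕ) : ZMod (p ^ 2))⁻¹)) := by
        rw [prod_congr rfl hfactor, prod_mul_distrib]
    _ = _ := by
        rw [hp.prod_Icc_mul_mod ha (fun j ↦ (j : ZMod (p ^ 2))),
          prod_one_add_mul_of_mul_self_eq_zero ZMod.natCast_mul_self_eq_zero, mul_comm]

theorem intCast_eq_mul_sum_of_mul_eq_pow_sub_one (hp : p.Prime) (ha : ¬ p ∣ a) (n : ℕ)
    {c : ℤ} (hc : p * c = a ^ ((p - 1) * n) - 1) :
    (c : ZMod p) = n * ∑ j ∈ Icc 1 (p - 1),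
      ((a * j / p : ℕ) : ZMod p) * ((a * j : ℕ) : ZMod p)⁻¹ := by
  have := Fact.mk hp
  set Q := ∑ j ∈ Icc 1 (p - 1),
    ((a * j / p : ℕ) : ZMod (p ^ 2)) * ((a * j % p : ℕ) : ZMod (p ^ 2))⁻¹
  have hlift : (p : ZMod (p ^ 2)) * c = p * (n * Q) := by
    have h := congrArg (Int.cast : ℤ → ZMod (p ^ 2)) hc
    push_cast at h
    rw [pow_mul, hp.natCast_pow_sub_one_eq_one_add_mul_sum ha,
      one_add_mul_pow_of_mul_self_eq_zero ZMod.natCast_mul_self_eq_zero] at h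
    linear_combination h
  have hreduce := ZMod.castHom_eq_of_natCast_mul_eq hlift
  rw [map_intCast] at hreduce
  rw [hreduce, map_mul, map_natCast, map_sum]
  congr 1
  refine sum_congr rfl fun j hj ↦ ?_
  rw [map_mul, map_natCast, ZMod.map_inv_of_isUnit _
    (hp.isUnit_natCast_of_mem_Icc 2 (hp.mul_mod_mem_Icc ha hj)), map_natCast, ZMod.natCast_mod]

end Nat.Prime

namespace ZMod

variable {p : ℕ} [Fact p.Prime]

theorem sum_Icc_sub_inv_eq_neg {k : ℕ} (hk : k < p) :
    ∑ j ∈ Icc (p - k) (p - 1), (j : ZMod p)⁻¹ = -∑ j ∈ Icc 1 k, (j : ZMod p)⁻¹ := by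
  rw [← sum_neg_distrib]
  refine sum_nbij' (p - ·) (p - ·) ?_ ?_ ?_ ?_ fun j hj ↦ ?_
  iterate 4 intro j hj; simp only [mem_Icc] at hj ⊢; omega
  rw [mem_Icc] at hj
  rw [Nat.cast_sub (by omega), natCast_self, zero_sub, inv_neg, neg_neg]

theorem sum_Icc_inv_eq_zero (hp2 : p ≠ 2) : ∑ j ∈ Icc 1 (p - 1), (j : ZMod p)⁻¹ = 0 := by
  have hp : p.Prime := Fact.out
  have hrefl := sum_Icc_sub_inv_eq_neg (k := p - 1) (Nat.sub_lt hp.pos one_pos)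
  rw [Nat.sub_sub_self hp.one_le] at hrefl
  have h2 : (2 : ZMod p) ≠ 0 := by
    exact_mod_cast natCast_ne_zero_of_pos_of_lt two_pos (by have := hp.two_le; omega)
  have h : (2 : ZMod p) * ∑ j ∈ Icc 1 (p - 1), (j : ZMod p)⁻¹ = 0 := by
    linear_combination hrefl
  exact (mul_eq_zero.mp h).resolve_left h2

end ZMod

theorem Nat.three_mul_div_eq {p j : ℕ} (hp : p % 3 ≠ 0) (hj : j < p) :
    3 * j / p = (if p / 3 < j then 1 else 0) + (if 2 * p / 3 < j then 1 else 0) := by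
  split_ifs
  · exact Nat.div_eq_of_lt_le (by omega) (by omega)
  · exact Nat.div_eq_of_lt_le (by omega) (by omega)
  · omega
  · exact Nat.div_eq_of_lt (by omega)

theorem ZMod.sum_three_mul_div_mul_inv_eq {p : ℕ} [Fact p.Prime] (hp5 : 5 ≤ p) :
    ∑ j ∈ Icc 1 (p - 1), ((3 * j / p : ℕ) : ZMod p) * (j : ZMod p)⁻¹ =
      -2 * ∑ j ∈ Icc 1 (p / 3), (j : ZMod p)⁻¹ := by
  have hp : p.Prime := Fact.out
  have hp3 : p % 3 ≠ 0 := fun h ↦ by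
    have := (Nat.prime_dvd_prime_iff_eq Nat.prime_three hp).mp (Nat.dvd_of_mod_eq_zero h)
    omega
  have hsplit : ∑ j ∈ Icc 1 (p - 1), ((3 * j / p : ℕ) : ZMod p) * (j : ZMod p)⁻¹ =
      ∑ j ∈ (Icc 1 (p - 1)).filter (p / 3 < ·), (j : ZMod p)⁻¹ +
        ∑ j ∈ (Icc 1 (p - 1)).filter (2 * p / 3 < ·), (j : ZMod p)⁻¹ := by
    rw [sum_filter, sum_filter, ← sum_add_distrib]
    refine sum_congr rfl fun j hj ↦ ?_
    rw [Nat.three_mul_div_eq hp3 (by rw [mem_Icc] at hj; omega)]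
    split_ifs <;> push_cast <;> ring
  have hlow : ∑ j ∈ (Icc 1 (p - 1)).filter (p / 3 < ·), (j : ZMod p)⁻¹ =
      -∑ j ∈ Icc 1 (p / 3), (j : ZMod p)⁻¹ := by
    have := sum_filter_add_sum_filter_not (Icc 1 (p - 1)) (p / 3 < ·) fun j ↦ (j : ZMod p)⁻¹
    rw [sum_Icc_inv_eq_zero (by omega)] at this
    have hfilter : (Icc 1 (p - 1)).filter (¬ p / 3 < ·) = Icc 1 (p / 3) := by
      ext j; simp only [mem_filter, mem_Icc]; omega
    rw [hfilter] at this
    linear_combination this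
  have hhigh : (Icc 1 (p - 1)).filter (2 * p / 3 < ·) = Icc (p - p / 3) (p - 1) := by
    ext j; simp only [mem_filter, mem_Icc]; omega
  rw [hsplit, hlow, hhigh, sum_Icc_sub_inv_eq_neg (by omega)]
  ring

theorem Nat.Prime.three_mul_intCast_eq_of_mul_eq_three_pow_sub_one {p : ℕ} (hp : p.Prime)
    (hp5 : 5 ≤ p) (n : ℕ) {c : ℤ} (hc : p * c = 3 ^ ((p - 1) * n) - 1) :
    3 * (c : ZMod p) = -(2 * n) * ∑ j ∈ Icc 1 (p / 3), (j : ZMod p)⁻¹ := by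
  have := Fact.mk hp
  have h3 : (3 : ZMod p) ≠ 0 := by
    exact_mod_cast ZMod.natCast_ne_zero_of_pos_of_lt three_pos (by omega)
  have hp3 : ¬ p ∣ 3 := fun h ↦ by have := Nat.le_of_dvd three_pos h; omega
  have hcancel : 3 * ∑ j ∈ Icc 1 (p - 1),
      ((3 * j / p : ℕ) : ZMod p) * ((3 * j : ℕ) : ZMod p)⁻¹ =
        ∑ j ∈ Icc 1 (p - 1), ((3 * j / p : ℕ) : ZMod p) * (j : ZMod p)⁻¹ := by
    rw [mul_sum]
    refine sum_congr rfl fun j _ ↦ ?_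
    rw [Nat.cast_mul, Nat.cast_ofNat, mul_inv, mul_left_comm, mul_inv_cancel_left₀ h3]
  rw [hp.intCast_eq_mul_sum_of_mul_eq_pow_sub_one hp3 n (by exact_mod_cast hc), mul_left_comm,
    hcancel, ZMod.sum_three_mul_div_mul_inv_eq hp5]
  ring

namespace Rat

variable {α : Type*} [DivisionRing α]

theorem natCast_den_intCast_ne_zero (z : ℤ) : ((z : ℚ).den : α) ≠ 0 := by
  rw [den_intCast, Nat.cast_one]
  exact one_ne_zero

theorem natCast_den_inv_natCast_ne_zero {j : ℕ} (hj : (j : α) ≠ 0) :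
    (((j : ℚ)⁻¹).den : α) ≠ 0 := by
  rwa [inv_natCast_den, if_neg (by rintro rfl; exact hj Nat.cast_zero)]

theorem cast_inv_natCast_of_ne_zero {j : ℕ} (hj : (j : α) ≠ 0) :
    (((j : ℚ)⁻¹ : ℚ) : α) = (j : α)⁻¹ := by
  rw [cast_inv_of_ne_zero (by rwa [num_natCast, Int.cast_natCast]), cast_natCast]

theorem natCast_den_add_ne_zero {x y : ℚ} (hx : (x.den : α) ≠ 0) (hy : (y.den : α) ≠ 0) :
    ((x + y).den : α) ≠ 0 :=
  ne_zero_of_dvd_ne_zero (by rw [Nat.cast_mul]; exact mul_ne_zero hx hy)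
    (Nat.cast_dvd_cast (add_den_dvd x y))

theorem natCast_den_mul_ne_zero {x y : ℚ} (hx : (x.den : α) ≠ 0) (hy : (y.den : α) ≠ 0) :
    ((x * y).den : α) ≠ 0 :=
  ne_zero_of_dvd_ne_zero (by rw [Nat.cast_mul]; exact mul_ne_zero hx hy)
    (Nat.cast_dvd_cast (mul_den_dvd x y))

theorem natCast_den_sub_ne_zero {x y : ℚ} (hx : (x.den : α) ≠ 0) (hy : (y.den : α) ≠ 0) :
    ((x - y).den : α) ≠ 0 :=
  ne_zero_of_dvd_ne_zero (by rw [Nat.cast_mul]; exact mul_ne_zero hx hy)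
    (Nat.cast_dvd_cast (sub_den_dvd x y))

theorem natCast_den_sum_ne_zero {ι : Type*} {s : Finset ι} {f : ι → ℚ}
    (hf : ∀ i ∈ s, ((f i).den : α) ≠ 0) : ((∑ i ∈ s, f i).den : α) ≠ 0 := by
  classical
  induction s using Finset.induction_on with
  | empty => simp
  | insert a s ha ih =>
    rw [sum_insert ha]
    exact natCast_den_add_ne_zero (hf a (mem_insert_self a s))
      (ih fun i hi ↦ hf i (mem_insert_of_mem hi))

theorem cast_sum_of_den_ne_zero {ι : Type*} {s : Finset ι} {f : ι → ℚ}
    (hf : ∀ i ∈ s, ((f i).den : α) ≠ 0) :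
    ((∑ i ∈ s, f i : ℚ) : α) = ∑ i ∈ s, (f i : α) := by
  classical
  induction s using Finset.induction_on with
  | empty => simp
  | insert a s ha ih =>
    have hs : ∀ i ∈ s, ((f i).den : α) ≠ 0 := fun i hi ↦ hf i (mem_insert_of_mem hi)
    rw [sum_insert ha, sum_insert ha, cast_add_of_ne_zero (hf a (mem_insert_self a s))
      (natCast_den_sum_ne_zero hs), ih hs]

end Rat

theorem ratModCong_one_of_cast_eq {p : ℕ} [Fact p.Prime] {x y : ℚ} (hx : (x.den : ZMod p) ≠ 0)
    (hy : (y.den : ZMod p) ≠ 0) (h : (x : ZMod p) = y) : RatModCong p 1 x y := by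
  have hden := Rat.natCast_den_sub_ne_zero hx hy
  have hcast : ((x - y : ℚ) : ZMod p) = 0 := by
    rw [Rat.cast_sub_of_ne_zero hx hy, h, sub_self]
  rw [Rat.cast_def, div_eq_zero_iff, or_iff_left hden, ZMod.intCast_zmod_eq_zero_iff_dvd] at hcast
  obtain ⟨a, ha⟩ := hcast
  refine ⟨a, (x - y).den, ?_, ?_⟩
  · rwa [Int.natCast_dvd_natCast, ← ZMod.natCast_eq_zero_iff]
  · rw [pow_one, Int.cast_natCast, Rat.mul_den_eq_num, ha, Int.cast_mul, Int.cast_natCast]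

theorem three_fermat_quotient_cong_general (p n : ℕ) (hp : p.Prime) (hp5 : 5 ≤ p)
    (c : ℤ) (hc : (p : ℤ) * c = 3 ^ ((p - 1) * n) - 1) :
    RatModCong p 1 (3 * (c : ℚ))
      (-(2 * (n : ℚ)) * ∑ j ∈ Finset.Icc 1 (p / 3), (1 : ℚ) / (j : ℚ)) := by
  have := Fact.mk hp
  have hj0 : ∀ j ∈ Icc 1 (p / 3), (j : ZMod p) ≠ 0 := fun j hj ↦ by
    rw [mem_Icc] at hj
    exact ZMod.natCast_ne_zero_of_pos_of_lt (by omega) (by omega)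
  have hden : ∀ j ∈ Icc 1 (p / 3), (((j : ℚ)⁻¹).den : ZMod p) ≠ 0 :=
    fun j hj ↦ Rat.natCast_den_inv_natCast_ne_zero (hj0 j hj)
  have hH := Rat.natCast_den_sum_ne_zero hden
  simp only [one_div]
  rw [show 3 * (c : ℚ) = ((3 * c : ℤ) : ℚ) by push_cast; ring,
    show -(2 * (n : ℚ)) = ((-(2 * n) : ℤ) : ℚ) by push_cast; ring]
  refine ratModCong_one_of_cast_eq (Rat.natCast_den_intCast_ne_zero _)
    (Rat.natCast_den_mul_ne_zero (Rat.natCast_den_intCast_ne_zero _) hH) ?_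
  rw [Rat.cast_intCast, Rat.cast_mul_of_ne_zero (Rat.natCast_den_intCast_ne_zero _) hH,
    Rat.cast_intCast, Rat.cast_sum_of_den_ne_zero hden,
    sum_congr rfl fun j hj ↦ Rat.cast_inv_natCast_of_ne_zero (hj0 j hj)]
  push_cast
  exact hp.three_mul_intCast_eq_of_mul_eq_three_pow_sub_one hp5 n hc

/-- For p ≥ 5 prime and n ≥ 1, with c = (3^((p-1)n)-1)/p (an integer),
3c ≡ -2n·H(⌊p/3⌋) mod p, where H(m) = ∑_{j=1}^m 1/j. -/
theorem three_fermat_quotient_cong (p n : ℕ) (hp : p.Prime) (hp5 : 5 ≤ p) (hn : 0 < n)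
    (c : ℤ) (hc : (p : ℤ) * c = 3 ^ ((p - 1) * n) - 1) :
    RatModCong p 1 (3 * (c : ℚ))
      (-(2 * (n : ℚ)) * ∑ j ∈ Finset.Icc 1 (p / 3), (1 : ℚ) / (j : ℚ)) :=
  three_fermat_quotient_cong_general p n hp hp5 c hc
end

section
/- For every positive integer n, sum_{k=1}^n (-1)^k * binom(n,k) * binom(n+k,k) / k = -2 * H(n), where H(n) = sum_{j=1}^n 1/j. -/
/-!
Write `S n` for the left-hand side. Term by term,
`S (n + 1) - S n = 2 / (n + 1) * ∑_{k=1}^{n+1} (-1)^k C(n+1,k) C(n+k,k)`,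
and the same alternating sum taken from `k = 0` vanishes: up to sign it is the `(n+1)`-st forward
difference at `0` of `x ↦ C(x+n, n)`, a polynomial of degree `n`. Hence the bracket is `-1`,
so `S (n + 1) - S n = -2 / (n + 1)`, and induction gives `S n = -2 H(n)`.
-/

open Finset

theorem Nat.succ_mul_choose_mul_choose_add (n k : ℕ) :
    (n + 1) * ((n + 1).choose k * (n + 1 + k).choose k) =
      (n + 1) * (n.choose k * (n + k).choose k) +
        2 * k * ((n + 1).choose k * (n + k).choose k) := by
  have h₁ := Nat.choose_mul_succ_eq n k
  have h₂ : (n + 1 + k).choose k * (n + 1) = (n + k).choose k * (n + 1 + k) := by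
    have := Nat.add_one_mul_choose_eq (n + k) n
    rw [Nat.choose_symm_add, add_right_comm, Nat.choose_symm_add] at this
    linarith
  rcases le_or_gt k (n + 1) with hk | hk
  · obtain ⟨m, hm⟩ := Nat.exists_eq_add_of_le hk
    rw [show n + 1 - k = m by omega] at h₁
    zify at h₁ h₂ hm ⊢
    linear_combination ((n + 1).choose k : ℤ) * h₂ - ((n + k).choose k : ℤ) * h₁ +
      ((n + 1).choose k * (n + k).choose k : ℤ) * hm
  · simp [Nat.choose_eq_zero_of_lt hk, Nat.choose_eq_zero_of_lt (by omega : n < k)]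

theorem Int.alternating_sum_range_choose_mul_choose_add (r : ℕ) :
    ∑ k ∈ Finset.range (r + 2), (-1 : ℤ) ^ k * (r + 1).choose k * (r + k).choose k = 0 := by
  have hΔ : (fwdDiff 1)^[r + 1] (fun x : ℕ ↦ ((x + r).choose r : ℤ)) 0 = 0 := by
    have hchoose := fwdDiff_iter_choose 0 r
    rw [add_zero] at hchoose
    rw [fwdDiff_iter_comp_add (f := fun x : ℕ ↦ (x.choose r : ℤ)), Function.iterate_succ_apply',
      hchoose]
    simp
  calc ∑ k ∈ Finset.range (r + 2), (-1 : ℤ) ^ k * (r + 1).choose k * (r + k).choose k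
      = (-1) ^ (r + 1) * (fwdDiff 1)^[r + 1] (fun x : ℕ ↦ ((x + r).choose r : ℤ)) 0 := by
        rw [fwdDiff_iter_eq_sum_shift, mul_sum]
        refine sum_congr rfl fun k hk ↦ ?_
        have hsign : (-1 : ℤ) ^ (r + 1) * (-1) ^ (r + 1 - k) = (-1) ^ k := by
          rw [← pow_add, show r + 1 + (r + 1 - k) = k + 2 * (r + 1 - k) by grind, pow_add,
            pow_mul]
          simp
        rw [smul_eq_mul, ← mul_assoc, ← mul_assoc, hsign, zero_add, smul_eq_mul, mul_one,
          add_comm k r, Nat.choose_symm_add]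
    _ = 0 := by rw [hΔ, mul_zero]

theorem alternating_sum_Icc_choose_mul_choose_add (n : ℕ) :
    ∑ k ∈ Icc 1 (n + 1), (-1 : ℚ) ^ k * (n + 1).choose k * (n + k).choose k = -1 := by
  have h := congrArg (Int.cast : ℤ → ℚ) (Int.alternating_sum_range_choose_mul_choose_add n)
  rw [Nat.range_succ_eq_Icc_zero, ← insert_Icc_add_one_left_eq_Icc (Nat.zero_le _),
    sum_insert (by simp)] at h
  push_cast at h
  simp only [Nat.choose_zero_right, Nat.cast_one, mul_one] at h
  linarith

theorem alternating_choose_mul_choose_add_div_succ_sub {n k : ℕ} (hk : k ≠ 0) :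
    (-1 : ℚ) ^ k * (n + 1).choose k * (n + 1 + k).choose k / k -
        (-1 : ℚ) ^ k * n.choose k * (n + k).choose k / k =
      2 / (n + 1) * ((-1 : ℚ) ^ k * (n + 1).choose k * (n + k).choose k) := by
  have h : ((n + 1 : ℕ) * ((n + 1).choose k * (n + 1 + k).choose k) : ℚ) =
      (n + 1 : ℕ) * (n.choose k * (n + k).choose k) +
        2 * k * ((n + 1).choose k * (n + k).choose k) := by
    exact_mod_cast Nat.succ_mul_choose_mul_choose_add n k
  push_cast at h
  field_simp
  linear_combination h

theorem alternating_sum_Icc_choose_mul_choose_add_div_succ_sub (n : ℕ) :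
    ∑ k ∈ Icc 1 (n + 1), (-1 : ℚ) ^ k * (n + 1).choose k * (n + 1 + k).choose k / k -
        ∑ k ∈ Icc 1 n, (-1 : ℚ) ^ k * n.choose k * (n + k).choose k / k =
      -2 / (n + 1) := by
  have hextend : ∑ k ∈ Icc 1 n, (-1 : ℚ) ^ k * n.choose k * (n + k).choose k / k =
      ∑ k ∈ Icc 1 (n + 1), (-1 : ℚ) ^ k * n.choose k * (n + k).choose k / k := by
    simp [sum_Icc_succ_top]
  rw [hextend, ← sum_sub_distrib,
    sum_congr rfl fun k hk ↦ alternating_choose_mul_choose_add_div_succ_sub (by grind),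
    ← mul_sum, alternating_sum_Icc_choose_mul_choose_add]
  ring

theorem alternating_sum_eq_neg_two_harmonic_general (n : ℕ) :
    ∑ k ∈ Finset.Icc 1 n,
        (-1 : ℚ) ^ k * (Nat.choose n k : ℚ) * (Nat.choose (n + k) k : ℚ) / (k : ℚ) =
      -2 * ∑ j ∈ Finset.Icc 1 n, (1 : ℚ) / (j : ℚ) := by
  induction n with
  | zero => simp
  | succ n ih =>
    rw [sum_Icc_succ_top (by omega) (fun j : ℕ ↦ (1 : ℚ) / j), mul_add, ← ih,
      ← sub_eq_iff_eq_add', alternating_sum_Icc_choose_mul_choose_add_div_succ_sub]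
    push_cast
    ring

/-- ∑_{k=1}^n (-1)^k C(n,k) C(n+k,k)/k = -2 H(n). -/
theorem alternating_sum_eq_neg_two_harmonic (n : ℕ) (hn : 0 < n) :
    ∑ k ∈ Finset.Icc 1 n,
        (-1 : ℚ) ^ k * (Nat.choose n k : ℚ) * (Nat.choose (n + k) k : ℚ) / (k : ℚ) =
      -2 * ∑ j ∈ Finset.Icc 1 n, (1 : ℚ) / (j : ℚ) :=
  alternating_sum_eq_neg_two_harmonic_general n
end

section
/- For every positive integer n and every rational (or real) y that is not zero and not equal to -j for any 1 ≤ j ≤ n, sum_{k=0}^n (-1)^k * binom(n,k) * binom(n+k,k) / (k + y) = ((-1)^n / y) * prod_{j=1}^n (y - j)/(y + j). -/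
/-!
Over the common denominator `∏_{k=0}^n (y + k)` the right-hand side has numerator
`(-1)^n ∏_{j=1}^n (y - j)`, a polynomial of degree `n`, so the right-hand side equals its own
partial fraction expansion, read off from Lagrange interpolation at the nodes `-k`, `0 ≤ k ≤ n`.
The coefficient of `1/(y + k)` is the numerator at `-k`, which is `(n + k)!/k!`, times the nodal
weight `(-1)^k/(k! (n - k)!)`, that is `(-1)^k C(n,k) C(n+k,k)`.
-/

open Finset Polynomial
open scoped Nat

namespace Lagrange

variable {F ι : Type*} [Field F] [DecidableEq ι] {s : Finset ι} {v : ι → F}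

theorem eval_div_eval_nodal_eq_sum (hvs : Set.InjOn v s) {p : F[X]} (hp : p.degree < #s)
    {x : F} (hx : ∀ i ∈ s, x ≠ v i) :
    p.eval x / (nodal s v).eval x =
      ∑ i ∈ s, nodalWeight s v i * (x - v i)⁻¹ * p.eval (v i) := by
  conv_lhs => rw [eq_interpolate hvs hp]
  rw [eval_interpolate_not_at_node _ hx, mul_div_cancel_left₀ _ (eval_nodal_not_at_node hx)]

end Lagrange

theorem prod_range_succ_eq_mul_prod_Icc {M : Type*} [CommMonoid M] (f : ℕ → M) (n : ℕ) :
    ∏ j ∈ range (n + 1), f j = f 0 * ∏ j ∈ Icc 1 n, f j := by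
  rw [range_eq_Ico, prod_eq_prod_Ico_succ_bot n.add_one_pos, zero_add, Ico_add_one_right_eq_Icc]

section CommRing

variable {R : Type*} [CommRing R]

theorem prod_range_natCast_sub_eq_neg_one_pow_mul_factorial (k : ℕ) :
    ∏ j ∈ range k, ((j : R) - k) = (-1) ^ k * k ! := by
  simp_rw [← neg_sub (k : R), prod_neg, card_range, ← descPochhammer_eval_eq_prod_range,
    descPochhammer_eval_eq_descFactorial, Nat.descFactorial_self]

theorem prod_range_succ_erase_natCast_sub {k n : ℕ} (hk : k ≤ n) :
    ∏ j ∈ (range (n + 1)).erase k, ((j : R) - k) = (-1) ^ k * k ! * (n - k)! := by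
  induction n, hk using Nat.le_induction with
  | base =>
    rw [range_add_one, erase_insert notMem_range_self,
      prod_range_natCast_sub_eq_neg_one_pow_mul_factorial, Nat.sub_self, Nat.factorial_zero,
      Nat.cast_one, mul_one]
  | succ m hkm ih =>
    rw [range_add_one, erase_insert_of_ne (by omega), prod_insert (by simp), ih,
      Nat.sub_add_comm hkm, Nat.factorial_succ]
    push_cast [hkm]
    ring

theorem factorial_mul_prod_Icc_natCast_add (k n : ℕ) :
    (k ! : R) * ∏ j ∈ Icc 1 n, ((k : R) + j) = (k + n)! := by
  induction n with
  | zero => simp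
  | succ n ih =>
    rw [prod_Icc_succ_top (by omega), ← mul_assoc, ih, ← add_assoc, Nat.factorial_succ]
    push_cast
    ring

variable (R) in
noncomputable def mortensonNumerator (n : ℕ) : R[X] :=
  C ((-1) ^ n) * ∏ j ∈ Icc 1 n, (X - C (j : R))

theorem eval_mortensonNumerator (n : ℕ) (y : R) :
    (mortensonNumerator R n).eval y = (-1) ^ n * ∏ j ∈ Icc 1 n, (y - j) := by
  simp_rw [mortensonNumerator, eval_mul, eval_prod, eval_sub, eval_X, eval_C]

theorem degree_mortensonNumerator_lt [IsDomain R] (n : ℕ) :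
    (mortensonNumerator R n).degree < (n + 1 : ℕ) := by
  rw [mortensonNumerator, degree_C_mul (by simp), ← Lagrange.nodal_eq (Icc 1 n) Nat.cast,
    Lagrange.degree_nodal, Nat.card_Icc]
  exact_mod_cast n.lt_succ_self

theorem factorial_mul_eval_neg_natCast_mortensonNumerator (k n : ℕ) :
    (k ! : R) * (mortensonNumerator R n).eval (-(k : R)) = (k + n)! := by
  rw [eval_mortensonNumerator]
  simp_rw [← neg_add', prod_neg, Nat.card_Icc, add_tsub_cancel_right]
  rw [← mul_assoc ((-1 : R) ^ n), ← mul_pow, neg_one_mul, neg_neg, one_pow, one_mul]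
  exact factorial_mul_prod_Icc_natCast_add k n

end CommRing

theorem Lagrange.nodalWeight_range_neg_natCast {K : Type*} [Field K] {k n : ℕ} (hk : k ≤ n) :
    nodalWeight (range (n + 1)) (fun j => -(j : K)) k = ((-1 : K) ^ k * k ! * (n - k)!)⁻¹ := by
  simp_rw [nodalWeight, neg_sub_neg, prod_inv_distrib, prod_range_succ_erase_natCast_sub hk]

theorem nodalWeight_mul_eval_mortensonNumerator {K : Type*} [Field K] [CharZero K] {k n : ℕ}
    (hk : k ≤ n) :
    Lagrange.nodalWeight (range (n + 1)) (fun j => -(j : K)) k *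
        (mortensonNumerator K n).eval (-(k : K)) =
      (-1) ^ k * (n.choose k : K) * ((n + k).choose k : K) := by
  have hfac (m : ℕ) : (m ! : K) ≠ 0 := Nat.cast_ne_zero.2 m.factorial_ne_zero
  have heval : (mortensonNumerator K n).eval (-(k : K)) = (k + n)! / k ! :=
    eq_div_of_mul_eq (hfac k)
      (by rw [mul_comm]; exact factorial_mul_eval_neg_natCast_mortensonNumerator k n)
  rw [Lagrange.nodalWeight_range_neg_natCast hk, heval, Nat.cast_choose K hk,
    Nat.cast_choose K le_add_self, add_tsub_cancel_right, add_comm n k]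
  field_simp [hfac]
  rw [← pow_mul, pow_mul', neg_one_sq, one_pow]

theorem mortenson_identity_general (n : ℕ) (y : ℚ) (hy : y ≠ 0)
    (hy' : ∀ j ∈ Finset.Icc 1 n, y ≠ -(j : ℚ)) :
    ∑ k ∈ Finset.range (n + 1),
        (-1 : ℚ) ^ k * (Nat.choose n k : ℚ) * (Nat.choose (n + k) k : ℚ) / ((k : ℚ) + y) =
      ((-1 : ℚ) ^ n / y) * ∏ j ∈ Finset.Icc 1 n, (y - (j : ℚ)) / (y + (j : ℚ)) := by
  have hnodes : ∀ k ∈ range (n + 1), y ≠ -(k : ℚ) := by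
    intro k hk
    rcases k.eq_zero_or_pos with rfl | hk0
    · simpa using hy
    · exact hy' k (mem_Icc.2 ⟨hk0, Nat.lt_succ_iff.1 (mem_range.1 hk)⟩)
  have hinj : Set.InjOn (fun k : ℕ => -(k : ℚ)) (range (n + 1)) :=
    (neg_injective.comp Nat.cast_injective).injOn
  have hdeg : (mortensonNumerator ℚ n).degree < #(range (n + 1)) := by
    rw [card_range]
    exact degree_mortensonNumerator_lt n
  have hterm : ∀ k ∈ range (n + 1),
      Lagrange.nodalWeight (range (n + 1)) (fun j => -(j : ℚ)) k * (y - -(k : ℚ))⁻¹ *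
          (mortensonNumerator ℚ n).eval (-(k : ℚ)) =
        (-1 : ℚ) ^ k * (n.choose k : ℚ) * ((n + k).choose k : ℚ) / ((k : ℚ) + y) := by
    intro k hk
    rw [mul_right_comm,
      nodalWeight_mul_eval_mortensonNumerator (Nat.lt_succ_iff.1 (mem_range.1 hk)),
      sub_neg_eq_add, add_comm y, div_eq_mul_inv]
  rw [← sum_congr rfl hterm, ← Lagrange.eval_div_eval_nodal_eq_sum hinj hdeg hnodes,
    Lagrange.eval_nodal, prod_range_succ_eq_mul_prod_Icc, eval_mortensonNumerator]
  simp_rw [sub_neg_eq_add, Nat.cast_zero, add_zero, prod_div_distrib]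
  exact (div_mul_div_comm _ _ _ _).symm

/-- Mortenson's identity: for y ≠ 0, y ≠ -j (1 ≤ j ≤ n),
∑_{k=0}^n (-1)^k C(n,k) C(n+k,k)/(k+y) = ((-1)^n/y) ∏_{j=1}^n (y-j)/(y+j). -/
theorem mortenson_identity (n : ℕ) (hn : 0 < n) (y : ℚ) (hy : y ≠ 0)
    (hy' : ∀ j ∈ Finset.Icc 1 n, y ≠ -(j : ℚ)) :
    ∑ k ∈ Finset.range (n + 1),
        (-1 : ℚ) ^ k * (Nat.choose n k : ℚ) * (Nat.choose (n + k) k : ℚ) / ((k : ℚ) + y) =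
      ((-1 : ℚ) ^ n / y) * ∏ j ∈ Finset.Icc 1 n, (y - (j : ℚ)) / (y + (j : ℚ)) :=
  mortenson_identity_general n y hy hy'
end

section
/- Let p ≥ 5 be prime, q = floor(p/3), and 1 ≤ k ≤ q. Then (-1)^k * binom(q, k) * binom(q + k, k) ≡ (3k)!/(k!^3) * 3^(-3k) mod p, as p-integral rationals (note 3^(-3k) makes sense mod p since p ≠ 3). -/
open Finset

lemma asc_prod (n : ℕ) : ∀ k, n.ascFactorial k = ∏ i ∈ range k, (n + i)
  | 0 => rfl
  | k + 1 => by rw [Nat.ascFactorial_succ, prod_range_succ, mul_comm, asc_prod n k]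

lemma fact3 : ∀ k, (3 * k).factorial = ∏ j ∈ range k, ((3*j+1)*(3*j+2)*(3*j+3))
  | 0 => rfl
  | k + 1 => by
    rw [prod_range_succ, ← fact3 k]
    have : 3 * (k+1) = (3*k+2) + 1 := by ring
    rw [this, Nat.factorial_succ]
    have : 3*k+2 = (3*k+1)+1 := by ring
    rw [this, Nat.factorial_succ]
    have : 3*k+1 = (3*k)+1 := by ring
    rw [this, Nat.factorial_succ]
    ring

/-- For p ≥ 5 prime, q = ⌊p/3⌋ and 1 ≤ k ≤ q,
(-1)^k C(q,k) C(q+k,k) ≡ (3k)!/(k!^3) 3^(-3k) mod p as p-integral rationals. -/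
theorem binom_cong_multinomial (p k : ℕ) (hp : p.Prime) (hp5 : 5 ≤ p)
    (hk1 : 1 ≤ k) (hk2 : k ≤ p / 3) :
    RatModCong p 1
      ((-1 : ℚ) ^ k * (Nat.choose (p / 3) k : ℚ) * (Nat.choose (p / 3 + k) k : ℚ))
      (((3 * k).factorial : ℚ) / ((k.factorial : ℚ) ^ 3) / (3 : ℚ) ^ (3 * k)) := by
  set q := p / 3 with hq
  -- key ZMod fact
  have hp3 : p % 3 = 1 ∨ p % 3 = 2 := by
    have h0 : p % 3 ≠ 0 := by
      intro h
      have : (3 : ℕ) ∣ p := Nat.dvd_of_mod_eq_zero h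
      rcases (Nat.Prime.eq_one_or_self_of_dvd hp 3 this) with h | h <;> omega
    omega
  have hpq : p = 3 * q + p % 3 := (Nat.div_add_mod p 3).symm ▸ by omega
  have hkey : ((9 * q^2 + 9 * q + 2 : ℕ) : ZMod p) = 0 := by
    have : (9 * q^2 + 9*q+2 : ℕ) = (3*q+1) * (3*q+2) := by ring
    rw [this, Nat.cast_mul]
    rcases hp3 with h | h
    · have : (3*q+1 : ℕ) = p := by omega
      rw [this, ZMod.natCast_self, zero_mul]
    · have : (3*q+2 : ℕ) = p := by omega
      rw [this, ZMod.natCast_self, mul_zero]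
  -- integer N
  set N : ℤ := (-1)^k * (q.choose k) * ((q+k).choose k) * (k.factorial)^3 * 3^(3*k)
      - (3*k).factorial with hN
  have hdvd : (p : ℤ) ∣ N := by
    have : ((N : ℤ) : ZMod p) = 0 := by
      rw [hN]
      push_cast
      rw [sub_eq_zero]
      have e1 : ((q.choose k : ℕ) : ZMod p) * (k.factorial : ℕ) = ((∏ i ∈ range k, (q - i) : ℕ) : ZMod p) := by
        rw [← Nat.cast_mul, ← Nat.descFactorial_eq_prod_range,
          Nat.descFactorial_eq_factorial_mul_choose, mul_comm]
      have e2 : (((q+k).choose k : ℕ) : ZMod p) * (k.factorial : ℕ) = ((∏ i ∈ range k, (q + 1 + i) : ℕ) : ZMod p) := by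
        rw [← Nat.cast_mul, ← asc_prod, Nat.ascFactorial_eq_factorial_mul_choose, mul_comm]
      have e3 : ((k.factorial : ℕ) : ZMod p) = ((∏ i ∈ range k, (i + 1) : ℕ) : ZMod p) := by
        rw [Finset.prod_range_add_one_eq_factorial]
      calc (-1:ZMod p)^k * (q.choose k) * ((q+k).choose k) * (k.factorial)^3 * 3^(3*k)
          = (∏ _i ∈ range k, (-1 : ZMod p)) * ((q.choose k : ℕ) * (k.factorial:ℕ))
            * (((q+k).choose k : ℕ) * (k.factorial:ℕ)) * ((k.factorial : ℕ):ZMod p)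
            * (∏ _i ∈ range k, (27 : ZMod p)) := by
            rw [Finset.prod_const, Finset.prod_const]
            push_cast
            ring_nf
            rw [mul_comm k 3, pow_mul]
            norm_num
        _ = ∏ i ∈ range k, ((-1 : ZMod p) * ((q - i : ℕ):ZMod p) * ((q+1+i : ℕ)) * ((i+1:ℕ)) * 27) := by
            rw [e1, e2, e3]
            push_cast
            rw [← Finset.prod_mul_distrib, ← Finset.prod_mul_distrib,
              ← Finset.prod_mul_distrib, ← Finset.prod_mul_distrib]
        _ = ((3*k).factorial : ZMod p) := by
            rw [fact3]
            push_cast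
            apply Finset.prod_congr rfl
            intro i hi
            have hik : i < k := Finset.mem_range.mp hi
            have hiq : i ≤ q := le_trans (le_of_lt hik) hk2
            rw [Nat.cast_sub hiq]
            have hkey' : ((9:ZMod p) * (q:ZMod p)^2 + 9*q + 2) = 0 := by
              push_cast at hkey; linear_combination hkey
            push_cast
            linear_combination (-3 * ((i:ZMod p)+1)) * hkey'
    rwa [ZMod.intCast_zmod_eq_zero_iff_dvd] at this
  have hb : ¬ (p:ℤ) ∣ (((k.factorial)^3 * 3^(3*k) : ℕ) : ℤ) := by
    rw [Int.natCast_dvd_natCast]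
    intro h
    have hqp : q < p := Nat.div_lt_self (by omega) (by omega)
    rcases (Nat.Prime.dvd_mul hp).mp h with h | h
    · have h2 := hp.dvd_of_dvd_pow h
      rw [Nat.Prime.dvd_factorial hp] at h2
      omega
    · have h2 := hp.dvd_of_dvd_pow h
      have := (Nat.prime_dvd_prime_iff_eq hp Nat.prime_three).mp h2
      omega
  obtain ⟨a, ha⟩ := hdvd
  refine ⟨a, (((k.factorial)^3 * 3^(3*k) : ℕ) : ℤ), hb, ?_⟩
  have hfac : (k.factorial : ℚ) ≠ 0 := Nat.cast_ne_zero.mpr k.factorial_ne_zero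
  have h3 : (3:ℚ)^(3*k) ≠ 0 := by positivity
  have hQ : ((N : ℤ) : ℚ) = (p : ℚ) * a := by rw [ha]; push_cast; ring
  rw [hN] at hQ
  push_cast at hQ ⊢
  rw [pow_one]
  field_simp at hQ ⊢
  linear_combination hQ
end

section
/- Let p be a prime and 0 < i < p. Then binom(p, i) ≡ (-1)^(i-1) * p / i mod p^2, i.e., i * binom(p, i) ≡ (-1)^(i-1) * p mod p^2 as integers. -/
lemma choose_pred_modeq (p : ℕ) (hp : p.Prime) :
    ∀ k : ℕ, k < p → ((p - 1).choose k : ℤ) ≡ (-1) ^ k [ZMOD (p : ℤ)] := by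
  intro k
  induction k with
  | zero => simp
  | succ k ih =>
    intro hk
    have hk' : k < p := Nat.lt_of_succ_lt hk
    have ihk := ih hk'
    have hsum : (p - 1).choose k + (p - 1).choose (k + 1) = p.choose (k + 1) := by
      obtain ⟨q, rfl⟩ : ∃ q, p = q + 1 := ⟨p - 1, by omega⟩
      simpa using (Nat.choose_succ_succ q k).symm
    have hdvd : (p : ℤ) ∣ (p.choose (k + 1) : ℤ) := by
      exact_mod_cast hp.dvd_choose_self (Nat.succ_ne_zero k) hk
    have h0 : ((p - 1).choose k : ℤ) + ((p - 1).choose (k + 1) : ℤ) ≡ 0 [ZMOD (p : ℤ)] := by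
      rw [show ((p - 1).choose k : ℤ) + ((p - 1).choose (k + 1) : ℤ)
          = ((p.choose (k + 1) : ℕ) : ℤ) by exact_mod_cast hsum]
      exact (Int.modEq_zero_iff_dvd).mpr hdvd
    have := (h0.sub ihk)
    calc ((p - 1).choose (k + 1) : ℤ)
        = ((p - 1).choose k + (p - 1).choose (k + 1)) - (p - 1).choose k := by ring
      _ ≡ 0 - (-1) ^ k [ZMOD (p : ℤ)] := this
      _ = (-1) ^ (k + 1) := by ring

/-- Gessel's congruence: for a prime p and 0 < i < p,
i·C(p,i) ≡ (-1)^(i-1)·p mod p² as integers. -/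
theorem gessel_congruence (p i : ℕ) (hp : p.Prime) (hi1 : 0 < i) (hi2 : i < p) :
    (i : ℤ) * (Nat.choose p i : ℤ) ≡ (-1 : ℤ) ^ (i - 1) * (p : ℤ) [ZMOD (p : ℤ) ^ 2] := by
  have hkey : p * (p - 1).choose (i - 1) = p.choose i * i := by
    obtain ⟨q, rfl⟩ : ∃ q, p = q + 1 := ⟨p - 1, by omega⟩
    obtain ⟨j, rfl⟩ : ∃ j, i = j + 1 := ⟨i - 1, by omega⟩
    simpa using Nat.add_one_mul_choose_eq q j
  have h1 : (i : ℤ) * (Nat.choose p i : ℤ) = (p : ℤ) * ((p - 1).choose (i - 1) : ℤ) := by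
    rw [mul_comm]; exact_mod_cast hkey.symm
  have h2 : ((p - 1).choose (i - 1) : ℤ) ≡ (-1) ^ (i - 1) [ZMOD (p : ℤ)] :=
    choose_pred_modeq p hp (i - 1) (by omega)
  have h3 := h2.mul_left' (c := (p : ℤ))
  rw [h1, sq]
  calc (p : ℤ) * ((p - 1).choose (i - 1) : ℤ)
      ≡ (p : ℤ) * (-1) ^ (i - 1) [ZMOD (p : ℤ) * (p : ℤ)] := h3
    _ = (-1) ^ (i - 1) * (p : ℤ) := by ring
end

section
/- Let p ≥ 5 be prime, n, m positive integers with 3pm + 3r ≤ pn and floor(p/3) < r ≤ p-1 (i.e., 3r ≥ p+1, r < p). Then p^2 divides the product multinomial(3pm+3r; pm+r, pm+r, pm+r) * binom(pn, 3pm+3r). -/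
/-- If the base-`p` unit digit of `n` is smaller than that of `k`, then `p ∣ choose n k`. -/
lemma prime_dvd_choose_of_mod_lt {p n k : ℕ} (hp : p.Prime) (h : n % p < k % p) :
    p ∣ Nat.choose n k := by
  haveI : Fact p.Prime := ⟨hp⟩
  have := Choose.choose_modEq_choose_mod_mul_choose_div_nat (n := n) (k := k) (p := p)
  rw [Nat.choose_eq_zero_of_lt h, zero_mul] at this
  simpa [Nat.ModEq, Nat.mod_self, Nat.zero_mod,
    Nat.dvd_iff_mod_eq_zero] using this

/-- For p ≥ 5 prime, n, m ≥ 1, ⌊p/3⌋ < r ≤ p-1 and 3pm+3r ≤ pn,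
p² divides multinomial(3pm+3r; pm+r, pm+r, pm+r) · C(pn, 3pm+3r).
Here the multinomial (3k)!/(k!)³ with k = pm+r is written as C(3k,k)·C(2k,k). -/
theorem vanishing_terms (p n m r : ℕ) (hp : p.Prime) (hp5 : 5 ≤ p)
    (hn : 0 < n) (hm : 0 < m) (hr1 : p / 3 < r) (hr2 : r ≤ p - 1)
    (hle : 3 * p * m + 3 * r ≤ p * n) :
    p ^ 2 ∣
      Nat.choose (3 * (p * m + r)) (p * m + r) * Nat.choose (2 * (p * m + r)) (p * m + r) *
        Nat.choose (p * n) (3 * (p * m + r)) := by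
  have hp0 : 0 < p := hp.pos
  have hr0 : 0 < r := lt_of_le_of_lt (Nat.zero_le _) hr1
  have hrp : r < p := lt_of_le_of_lt hr2 (Nat.pred_lt hp0.ne')
  have hrmod : r % p = r := Nat.mod_eq_of_lt hrp
  -- 3r ≥ p + 1
  have h3r : p < 3 * r := by
    rcases Nat.lt_or_ge p (3 * r) with h | h
    · exact h
    · exact absurd (Nat.div_lt_iff_lt_mul (by norm_num) |>.mp hr1) (by omega)
  -- p ∤ 3r
  have hp3r : ¬ p ∣ 3 * r := by
    intro hdvd
    rcases (Nat.Prime.dvd_mul hp).mp hdvd with h | h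
    · have := Nat.le_of_dvd (by norm_num) h; omega
    · have := Nat.le_of_dvd hr0 h; omega
  -- key digit facts
  have hkmod : (p * m + r) % p = r := by
    rw [Nat.add_mod, Nat.mul_mod_right, Nat.zero_add, hrmod, hrmod]
  have h3kmod : (3 * (p * m + r)) % p = (3 * r) % p := by
    have h : 3 * (p * m + r) = p * (3 * m) + 3 * r := by ring
    rw [h, Nat.mul_add_mod]
  have h2kmod : (2 * (p * m + r)) % p = (2 * r) % p := by
    have h : 2 * (p * m + r) = p * (2 * m) + 2 * r := by ring
    rw [h, Nat.mul_add_mod]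
  -- p ∣ C(pn, 3k)
  have hbin : p ∣ Nat.choose (p * n) (3 * (p * m + r)) := by
    apply prime_dvd_choose_of_mod_lt hp
    rw [Nat.mul_mod_right, h3kmod]
    have : (3 * r) % p ≠ 0 := fun h => hp3r (Nat.dvd_of_mod_eq_zero h)
    omega
  -- p ∣ C(3k,k) * C(2k,k)
  have hmul : p ∣ Nat.choose (3 * (p * m + r)) (p * m + r) *
      Nat.choose (2 * (p * m + r)) (p * m + r) := by
    rcases Nat.lt_or_ge (2 * r) p with h2r | h2r
    · -- 2r < p: carry in k + 2k since 3r ≥ p+1 and 3r - p < r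
      refine Dvd.dvd.mul_right ?_ _
      apply prime_dvd_choose_of_mod_lt hp
      rw [h3kmod, hkmod]
      have h1 : 3 * r < 2 * p := by omega
      have : (3 * r) % p = 3 * r - p := by
        rw [Nat.mod_eq_sub_mod (by omega), Nat.mod_eq_of_lt (by omega)]
      omega
    · -- 2r ≥ p: carry in k + k since 2r - p < r
      refine Dvd.dvd.mul_left ?_ _
      apply prime_dvd_choose_of_mod_lt hp
      rw [h2kmod, hkmod]
      have h1 : 2 * r < 2 * p := by omega
      have : (2 * r) % p = 2 * r - p := by
        rw [Nat.mod_eq_sub_mod (by omega), Nat.mod_eq_of_lt (by omega)]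
      omega
  have := Nat.mul_dvd_mul hmul hbin
  simpa [pow_two] using this
end
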